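/- arXiv:2209.06894 — 9 statements merged into one kernel-verified Lean document; each statement's English description precedes it below -/
import Mathlib

section
/- In the Lorentzian amalgamation X = X₁ ⊔_A X₂ of two Lorentzian pre-length spaces along subsets A₁ ⊆ X₁, A₂ ⊆ X₂ identified by a causality-preserving bijection f : A₁ → A₂, one has [x] ≤̃ [y] if and only if either x and y lie in the same space X_i and x ≤ y there, or there exists a ∈ A such that x ≤ aⁱ in X_i and aʲ ≤ y in X_j, where {i,j} = {1,2}. -/
open Set Metric

variable {α : Type*}

/-- The generating relation identifying `a ∈ A₁` with `f a`. -/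
def glueRel {X₁ X₂ : Type*} (A₁ : Set X₁) (f : X₁ → X₂) : X₁ ⊕ X₂ → X₁ ⊕ X₂ → Prop :=
  fun p q => ∃ a ∈ A₁, p = Sum.inl a ∧ q = Sum.inr (f a)

/-- The equivalence relation generated by `a ∼ f a`. -/
def glueEqv {X₁ X₂ : Type*} (A₁ : Set X₁) (f : X₁ → X₂) : X₁ ⊕ X₂ → X₁ ⊕ X₂ → Prop :=
  Relation.EqvGen (glueRel A₁ f)

def glueSetoid {X₁ X₂ : Type*} (A₁ : Set X₁) (f : X₁ → X₂) : Setoid (X₁ ⊕ X₂) :=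
  ⟨glueEqv A₁ f, Relation.EqvGen.is_equivalence _⟩

/-- The disjoint union of two relations. -/
def sumRel {X₁ X₂ : Type*} (r₁ : X₁ → X₁ → Prop) (r₂ : X₂ → X₂ → Prop) :
    X₁ ⊕ X₂ → X₁ ⊕ X₂ → Prop
  | Sum.inl x, Sum.inl y => r₁ x y
  | Sum.inr x, Sum.inr y => r₂ x y
  | _, _ => False

/-- One step `p ∼ p' R q' ∼ q` of a chain. -/
def glueStep (R eqv : α → α → Prop) : α → α → Prop := fun p q =>
  ∃ p' q', eqv p p' ∧ R p' q' ∧ eqv q' q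

/-- The quotient relation: there is a finite chain `x ∼ x₁ R y₁ ∼ x₂ R y₂ ∼ ⋯ ∼ xₙ R yₙ ∼ y`. -/
def quotRel (R eqv : α → α → Prop) : α → α → Prop :=
  Relation.TransGen (glueStep R eqv)

/-- Explicit characterization of the gluing equivalence. -/
def eqvChar {X₁ X₂ : Type*} (A₁ : Set X₁) (f : X₁ → X₂) : X₁ ⊕ X₂ → X₁ ⊕ X₂ → Prop :=
  fun p q => p = q ∨ ∃ a ∈ A₁,
    (p = Sum.inl a ∧ q = Sum.inr (f a)) ∨ (p = Sum.inr (f a) ∧ q = Sum.inl a)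

theorem glueEqv_iff_eqvChar {X₁ X₂ : Type*} (A₁ : Set X₁) (f : X₁ → X₂)
    (hinj : Set.InjOn f A₁) (p q : X₁ ⊕ X₂) :
    glueEqv A₁ f p q ↔ eqvChar A₁ f p q := by
  constructor
  · intro h
    induction h with
    | rel p q h => obtain ⟨a, ha, rfl, rfl⟩ := h; exact Or.inr ⟨a, ha, Or.inl ⟨rfl, rfl⟩⟩
    | refl => exact Or.inl rfl
    | symm p q _ ih =>
      rcases ih with rfl | ⟨a, ha, ⟨rfl, rfl⟩ | ⟨rfl, rfl⟩⟩
      · exact Or.inl rfl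
      · exact Or.inr ⟨a, ha, Or.inr ⟨rfl, rfl⟩⟩
      · exact Or.inr ⟨a, ha, Or.inl ⟨rfl, rfl⟩⟩
    | trans p q r _ _ ih1 ih2 =>
      rcases ih1 with rfl | ⟨a, ha, ⟨rfl, rfl⟩ | ⟨rfl, rfl⟩⟩
      · exact ih2
      · rcases ih2 with rfl | ⟨b, hb, ⟨h1, h2⟩ | ⟨h1, rfl⟩⟩
        · exact Or.inr ⟨a, ha, Or.inl ⟨rfl, rfl⟩⟩
        · exact absurd h1 (by simp)
        · have hfa : f a = f b := by injection h1
          have := hinj ha hb hfa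
          subst this
          exact Or.inl rfl
      · rcases ih2 with rfl | ⟨b, hb, ⟨h1, rfl⟩ | ⟨h1, h2⟩⟩
        · exact Or.inr ⟨a, ha, Or.inr ⟨rfl, rfl⟩⟩
        · have hab : a = b := by injection h1
          subst hab
          exact Or.inl rfl
        · exact absurd h1 (by simp)
  · rintro (rfl | ⟨a, ha, ⟨rfl, rfl⟩ | ⟨rfl, rfl⟩⟩)
    · exact Relation.EqvGen.refl _
    · exact Relation.EqvGen.rel _ _ ⟨a, ha, rfl, rfl⟩
    · exact Relation.EqvGen.symm _ _ (Relation.EqvGen.rel _ _ ⟨a, ha, rfl, rfl⟩)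

/-- **Quotient relation reformulation**: in the amalgamation, `[x] ≤̃ [y]` iff `x ≤ y`
within one factor, or there is `a ∈ A₁` with `x ≤ a` in one factor and `f a ≤ y`
in the other. -/
theorem quotient_relation_reformulation {X₁ X₂ : Type*}
    (A₁ : Set X₁) (A₂ : Set X₂) (f : X₁ → X₂) (hf : Set.BijOn f A₁ A₂)
    (le₁ : X₁ → X₁ → Prop) (le₂ : X₂ → X₂ → Prop)
    (le₁_refl : ∀ x, le₁ x x) (le₁_trans : ∀ x y z, le₁ x y → le₁ y z → le₁ x z)
    (le₂_refl : ∀ x, le₂ x x) (le₂_trans : ∀ x y z, le₂ x y → le₂ y z → le₂ x z)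
    (hpres : ∀ a ∈ A₁, ∀ b ∈ A₁, (le₁ a b ↔ le₂ (f a) (f b)))
    (x y : X₁ ⊕ X₂) :
    quotRel (sumRel le₁ le₂) (glueEqv A₁ f) x y ↔
      sumRel le₁ le₂ x y ∨
      ∃ a ∈ A₁,
        (sumRel le₁ le₂ x (Sum.inl a) ∧ sumRel le₁ le₂ (Sum.inr (f a)) y) ∨
        (sumRel le₁ le₂ x (Sum.inr (f a)) ∧ sumRel le₁ le₂ (Sum.inl a) y) := by
  set S := sumRel le₁ le₂ with hS
  set T : X₁ ⊕ X₂ → X₁ ⊕ X₂ → Prop := fun x y =>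
    S x y ∨ ∃ a ∈ A₁,
      (S x (Sum.inl a) ∧ S (Sum.inr (f a)) y) ∨
      (S x (Sum.inr (f a)) ∧ S (Sum.inl a) y) with hT
  -- basic facts about S
  have hStrans : ∀ p q r, S p q → S q r → S p r := by
    rintro (p | p) (q | q) (r | r) h1 h2 <;>
      simp only [hS, sumRel] at h1 h2 ⊢ <;> first
        | exact le₁_trans _ _ _ h1 h2
        | exact le₂_trans _ _ _ h1 h2
        | exact h1.elim
        | exact h2.elim
  -- compatibility of T with eqvChar on the left
  have hcompL : ∀ p p' q, eqvChar A₁ f p p' → T p' q → T p q := by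
    rintro p p' q (rfl | ⟨a, ha, ⟨rfl, rfl⟩ | ⟨rfl, rfl⟩⟩) hT'
    · exact hT'
    · -- p = inl a, p' = inr (f a)
      rcases hT' with h | ⟨b, hb, ⟨h1, h2⟩ | ⟨h1, h2⟩⟩
      · -- S (inr (f a)) q : q is inr
        cases q with
        | inl q => exact absurd h (by simp [hS, sumRel])
        | inr q =>
          exact Or.inr ⟨a, ha, Or.inl ⟨by simpa [hS, sumRel] using le₁_refl a, h⟩⟩
      · exact absurd h1 (by simp [hS, sumRel])
      · -- S (inr (f a)) (inr (f b)) and S (inl b) q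
        cases q with
        | inr q => exact absurd h2 (by simp [hS, sumRel])
        | inl q =>
          have hab : le₁ a b := (hpres a ha b hb).2 (by simpa [hS, sumRel] using h1)
          exact Or.inl (by
            simp only [hS, sumRel]
            exact le₁_trans _ _ _ hab (by simpa [hS, sumRel] using h2))
    · -- p = inr (f a), p' = inl a
      rcases hT' with h | ⟨b, hb, ⟨h1, h2⟩ | ⟨h1, h2⟩⟩
      · cases q with
        | inr q => exact absurd h (by simp [hS, sumRel])
        | inl q =>
          exact Or.inr ⟨a, ha, Or.inr ⟨by simpa [hS, sumRel] using le₂_refl (f a), h⟩⟩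
      · -- S (inl a) (inl b), S (inr (f b)) q
        cases q with
        | inl q => exact absurd h2 (by simp [hS, sumRel])
        | inr q =>
          have hab : le₂ (f a) (f b) := (hpres a ha b hb).1 (by simpa [hS, sumRel] using h1)
          exact Or.inl (by
            simp only [hS, sumRel]
            exact le₂_trans _ _ _ hab (by simpa [hS, sumRel] using h2))
      · exact absurd h1 (by simp [hS, sumRel])
  -- compatibility of T with eqvChar on the right
  have hcompR : ∀ p q q', T p q' → eqvChar A₁ f q' q → T p q := by
    rintro p q q' hT' (rfl | ⟨a, ha, ⟨rfl, rfl⟩ | ⟨rfl, rfl⟩⟩)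
    · exact hT'
    · -- q' = inl a, q = inr (f a)
      rcases hT' with h | ⟨b, hb, ⟨h1, h2⟩ | ⟨h1, h2⟩⟩
      · cases p with
        | inr p => exact absurd h (by simp [hS, sumRel])
        | inl p =>
          exact Or.inr ⟨a, ha, Or.inl ⟨h, by simpa [hS, sumRel] using le₂_refl (f a)⟩⟩
      · exact absurd h2 (by simp [hS, sumRel])
      · -- S p (inr (f b)), S (inl b) (inl a)
        cases p with
        | inl p => exact absurd h1 (by simp [hS, sumRel])
        | inr p =>
          have hab : le₂ (f b) (f a) := (hpres b hb a ha).1 (by simpa [hS, sumRel] using h2)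
          exact Or.inl (by
            simp only [hS, sumRel]
            exact le₂_trans _ _ _ (by simpa [hS, sumRel] using h1) hab)
    · -- q' = inr (f a), q = inl a
      rcases hT' with h | ⟨b, hb, ⟨h1, h2⟩ | ⟨h1, h2⟩⟩
      · cases p with
        | inl p => exact absurd h (by simp [hS, sumRel])
        | inr p =>
          exact Or.inr ⟨a, ha, Or.inr ⟨h, by simpa [hS, sumRel] using le₁_refl a⟩⟩
      · -- S p (inl b), S (inr (f b)) (inr (f a))
        cases p with
        | inr p => exact absurd h1 (by simp [hS, sumRel])
        | inl p =>
          have hab : le₁ b a := (hpres b hb a ha).2 (by simpa [hS, sumRel] using h2)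
          exact Or.inl (by
            simp only [hS, sumRel]
            exact le₁_trans _ _ _ (by simpa [hS, sumRel] using h1) hab)
      · exact absurd h2 (by simp [hS, sumRel])
  -- transitivity of T
  have hTtrans : ∀ p q r, T p q → T q r → T p r := by
    rintro p q r (h | ⟨a, ha, ⟨h1, h2⟩ | ⟨h1, h2⟩⟩) (h' | ⟨b, hb, ⟨h1', h2'⟩ | ⟨h1', h2'⟩⟩)
    · exact Or.inl (hStrans _ _ _ h h')
    · exact Or.inr ⟨b, hb, Or.inl ⟨hStrans _ _ _ h h1', h2'⟩⟩
    · exact Or.inr ⟨b, hb, Or.inr ⟨hStrans _ _ _ h h1', h2'⟩⟩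
    · exact Or.inr ⟨a, ha, Or.inl ⟨h1, hStrans _ _ _ h2 h'⟩⟩
    · -- h2 : S (inr (f a)) q, h1' : S q (inl b) — impossible
      cases q with
      | inl q => exact absurd h2 (by simp [hS, sumRel])
      | inr q =>
        exact absurd h1' (by simp [hS, sumRel])
    · -- h2 : S (inr (f a)) q, h1' : S q (inr (f b)), h2' : S (inl b) r
      cases q with
      | inl q => exact absurd h2 (by simp [hS, sumRel])
      | inr q =>
        have hab : le₂ (f a) (f b) :=
          le₂_trans _ _ _ (by simpa [hS, sumRel] using h2) (by simpa [hS, sumRel] using h1')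
        have hab₁ : le₁ a b := (hpres a ha b hb).2 hab
        cases p with
        | inr p => exact absurd h1 (by simp [hS, sumRel])
        | inl p =>
          cases r with
          | inr r => exact absurd h2' (by simp [hS, sumRel])
          | inl r =>
            refine Or.inl ?_
            simp only [hS, sumRel] at h1 h2' ⊢
            exact le₁_trans _ _ _ (le₁_trans _ _ _ h1 hab₁) h2'
    · exact Or.inr ⟨a, ha, Or.inr ⟨h1, hStrans _ _ _ h2 h'⟩⟩
    · -- h2 : S (inl a) q, h1' : S q (inl b), h2' : S (inr (f b)) r
      cases q with
      | inr q => exact absurd h2 (by simp [hS, sumRel])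
      | inl q =>
        have hab : le₁ a b :=
          le₁_trans _ _ _ (by simpa [hS, sumRel] using h2) (by simpa [hS, sumRel] using h1')
        have hfab : le₂ (f a) (f b) := (hpres a ha b hb).1 hab
        cases p with
        | inl p => exact absurd h1 (by simp [hS, sumRel])
        | inr p =>
          cases r with
          | inl r => exact absurd h2' (by simp [hS, sumRel])
          | inr r =>
            refine Or.inl ?_
            simp only [hS, sumRel] at h1 h2' ⊢
            exact le₂_trans _ _ _ (le₂_trans _ _ _ h1 hfab) h2'
    · -- h2 : S (inl a) q, h1' : S q (inr (f b)) — impossible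
      cases q with
      | inr q => exact absurd h2 (by simp [hS, sumRel])
      | inl q => exact absurd h1' (by simp [hS, sumRel])
  have heqv : ∀ p q, glueEqv A₁ f p q → eqvChar A₁ f p q :=
    fun p q h => (glueEqv_iff_eqvChar A₁ f hf.injOn p q).1 h
  constructor
  · intro h
    induction h with
    | single h =>
      obtain ⟨p', q', e1, hR, e2⟩ := h
      exact hcompR _ _ _ (hcompL _ _ _ (heqv _ _ e1) (Or.inl hR)) (heqv _ _ e2)
    | tail _ h ih =>
      obtain ⟨p', q', e1, hR, e2⟩ := h
      exact hTtrans _ _ _ ih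
        (hcompR _ _ _ (hcompL _ _ _ (heqv _ _ e1) (Or.inl hR)) (heqv _ _ e2))
  · rintro (h | ⟨a, ha, ⟨h1, h2⟩ | ⟨h1, h2⟩⟩)
    · exact Relation.TransGen.single ⟨x, y, Relation.EqvGen.refl _, h, Relation.EqvGen.refl _⟩
    · exact (Relation.TransGen.single ⟨x, Sum.inl a, Relation.EqvGen.refl _, h1,
        Relation.EqvGen.rel _ _ ⟨a, ha, rfl, rfl⟩⟩).tail
        ⟨Sum.inr (f a), y, Relation.EqvGen.refl _, h2, Relation.EqvGen.refl _⟩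
    · exact (Relation.TransGen.single ⟨x, Sum.inr (f a), Relation.EqvGen.refl _, h1,
        Relation.EqvGen.symm _ _ (Relation.EqvGen.rel _ _ ⟨a, ha, rfl, rfl⟩)⟩).tail
        ⟨Sum.inl a, y, Relation.EqvGen.refl _, h2, Relation.EqvGen.refl _⟩
end

section
/- If X₁ and X₂ are chronological Lorentzian pre-length spaces (i.e., x ≪ x never holds), then their Lorentzian amalgamation X = X₁ ⊔_A X₂ is chronological, i.e., the relation ≪̃ is irreflexive. -/
open Set Metric

variable {α : Type*}

/-- A gluing chain from `x` to `y`: a nonempty list of pairs `(xᵢ, yᵢ)` with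
`x ∼ x₁`, `yᵢ ∼ xᵢ₊₁`, and `yₙ ∼ y`. -/
def IsGlueChain (eqv : α → α → Prop) (x y : α) (l : List (α × α)) : Prop :=
  l ≠ [] ∧ l.Chain' (fun p q => eqv p.2 q.1) ∧
    (∃ p, l.head? = some p ∧ eqv x p.1) ∧ (∃ p, l.getLast? = some p ∧ eqv p.2 y)

/-- A causal chain: a gluing chain in which each pair is causally related. -/
def IsCausalChain (le eqv : α → α → Prop) (x y : α) (l : List (α × α)) : Prop :=
  IsGlueChain eqv x y l ∧ ∀ p ∈ l, le p.1 p.2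

/-- The quotient time separation: supremum of `Σ τ(xᵢ,yᵢ)` over causal chains. -/
noncomputable def quotTau (τ : α → α → ENNReal) (le eqv : α → α → Prop) (x y : α) : ENNReal :=
  sSup {v | ∃ l, IsCausalChain le eqv x y l ∧ v = (l.map fun p => τ p.1 p.2).sum}

/-- The quotient semi-metric: infimum of `Σ d(xᵢ,yᵢ)` over gluing chains. -/
noncomputable def quotDist (D : α → α → ENNReal) (eqv : α → α → Prop) (x y : α) : ENNReal :=
  sInf {v | ∃ l, IsGlueChain eqv x y l ∧ v = (l.map fun p => D p.1 p.2).sum}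

/-- The disjoint union time separation (zero across the two factors). -/
noncomputable def sumTau {X₁ X₂ : Type*} (τ₁ : X₁ → X₁ → ENNReal) (τ₂ : X₂ → X₂ → ENNReal) :
    X₁ ⊕ X₂ → X₁ ⊕ X₂ → ENNReal
  | Sum.inl x, Sum.inl y => τ₁ x y
  | Sum.inr x, Sum.inr y => τ₂ x y
  | _, _ => 0

/-- The disjoint union (extended) distance (infinite across the two factors). -/
noncomputable def sumEDist {X₁ X₂ : Type*} [PseudoEMetricSpace X₁] [PseudoEMetricSpace X₂] :
    X₁ ⊕ X₂ → X₁ ⊕ X₂ → ENNReal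
  | Sum.inl x, Sum.inl y => edist x y
  | Sum.inr x, Sum.inr y => edist x y
  | _, _ => ⊤

/-- A future-directed causal curve w.r.t. an extended distance `D` (locally Lipschitz)
and a causal relation `R` (monotone). -/
def IsCausalCurveE (D : α → α → ENNReal) (R : α → α → Prop) (γ : ℝ → α) (a b : ℝ) : Prop :=
  a ≤ b ∧
  (∀ t ∈ Set.Icc a b, ∃ K : NNReal, ∃ ε > (0:ℝ), ∀ s ∈ Set.Icc a b, ∀ s' ∈ Set.Icc a b,
      |s - t| < ε → |s' - t| < ε → D (γ s) (γ s') ≤ (K : ENNReal) * ENNReal.ofReal |s - s'|) ∧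
  ∀ s ∈ Set.Icc a b, ∀ t ∈ Set.Icc a b, s < t → R (γ s) (γ t)

/-- The `τ`-length of a curve: infimum over partitions of `Σ τ(γ(tᵢ),γ(tᵢ₊₁))`. -/
noncomputable def tauLen (T : α → α → ENNReal) (γ : ℝ → α) (a b : ℝ) : ENNReal :=
  sInf {v | ∃ n : ℕ, ∃ t : Fin (n + 1) → ℝ, StrictMono t ∧ t 0 = a ∧ t (Fin.last n) = b ∧
    v = ∑ i : Fin n, T (γ (t i.castSucc)) (γ (t i.succ))}

/-- The `d`-length of a curve: supremum over partitions of `Σ d(γ(tᵢ),γ(tᵢ₊₁))`. -/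
noncomputable def dLen (D : α → α → ENNReal) (γ : ℝ → α) (a b : ℝ) : ENNReal :=
  sSup {v | ∃ n : ℕ, ∃ t : Fin (n + 1) → ℝ, StrictMono t ∧ t 0 = a ∧ t (Fin.last n) = b ∧
    v = ∑ i : Fin n, D (γ (t i.castSucc)) (γ (t i.succ))}

/-- The quotient relation, descended to the quotient space. -/
def qRel {X₁ X₂ : Type*} (A₁ : Set X₁) (f : X₁ → X₂) (R : X₁ ⊕ X₂ → X₁ ⊕ X₂ → Prop)
    (p q : Quotient (glueSetoid A₁ f)) : Prop :=
  ∃ x y, Quotient.mk (glueSetoid A₁ f) x = p ∧ Quotient.mk (glueSetoid A₁ f) y = q ∧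
    quotRel R (glueEqv A₁ f) x y

/-- The quotient semi-metric, descended to the quotient space. -/
noncomputable def qDist {X₁ X₂ : Type*} [PseudoEMetricSpace X₁] [PseudoEMetricSpace X₂]
    (A₁ : Set X₁) (f : X₁ → X₂) (p q : Quotient (glueSetoid A₁ f)) : ENNReal :=
  quotDist sumEDist (glueEqv A₁ f) p.out q.out

/-- The quotient time separation, descended to the quotient space. -/
noncomputable def qTau {X₁ X₂ : Type*} (A₁ : Set X₁) (f : X₁ → X₂)
    (τ₁ : X₁ → X₁ → ENNReal) (τ₂ : X₂ → X₂ → ENNReal)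
    (le₁ : X₁ → X₁ → Prop) (le₂ : X₂ → X₂ → Prop)
    (p q : Quotient (glueSetoid A₁ f)) : ENNReal :=
  quotTau (sumTau τ₁ τ₂) (sumRel le₁ le₂) (glueEqv A₁ f) p.out q.out

/-- The causal relation of the disjoint union that may pass from one factor to the other through
the gluing set. It contains the gluing equivalence and every step of a causal chain, so a chain
from `p` back to `p` forces `y ≤ x` for each of its pairs `(x, y)`; if `τ(x, y) > 0`, the reverse
triangle inequality then gives `τ(x, x) > 0`, against chronology. -/
def glueLe {X₁ X₂ : Type*} (A₁ : Set X₁) (f : X₁ → X₂)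
    (le₁ : X₁ → X₁ → Prop) (le₂ : X₂ → X₂ → Prop) : X₁ ⊕ X₂ → X₁ ⊕ X₂ → Prop
  | Sum.inl x, Sum.inl y => le₁ x y
  | Sum.inr x, Sum.inr y => le₂ x y
  | Sum.inl x, Sum.inr y => ∃ a ∈ A₁, le₁ x a ∧ le₂ (f a) y
  | Sum.inr x, Sum.inl y => ∃ a ∈ A₁, le₂ x (f a) ∧ le₁ a y

section glueLe

variable {X₁ X₂ : Type*} {A₁ : Set X₁} {f : X₁ → X₂}
  {le₁ : X₁ → X₁ → Prop} {le₂ : X₂ → X₂ → Prop}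

theorem glueLe_refl (le₁_refl : ∀ x, le₁ x x) (le₂_refl : ∀ x, le₂ x x) (p : X₁ ⊕ X₂) :
    glueLe A₁ f le₁ le₂ p p := by
  cases p with
  | inl x => exact le₁_refl x
  | inr x => exact le₂_refl x

theorem glueLe_trans
    (le₁_trans : ∀ x y z, le₁ x y → le₁ y z → le₁ x z)
    (le₂_trans : ∀ x y z, le₂ x y → le₂ y z → le₂ x z)
    (hpres_le : ∀ a ∈ A₁, ∀ b ∈ A₁, (le₁ a b ↔ le₂ (f a) (f b))) :
    ∀ p q r, glueLe A₁ f le₁ le₂ p q → glueLe A₁ f le₁ le₂ q r → glueLe A₁ f le₁ le₂ p r := by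
  intro p q r hpq hqr
  rcases p with x | x <;> rcases q with y | y <;> rcases r with z | z
  · exact le₁_trans _ _ _ hpq hqr
  · obtain ⟨a, ha, hya, haz⟩ := hqr
    exact ⟨a, ha, le₁_trans _ _ _ hpq hya, haz⟩
  · obtain ⟨a, ha, hxa, hay⟩ := hpq
    obtain ⟨b, hb, hyb, hbz⟩ := hqr
    exact le₁_trans _ _ _ hxa <|
      le₁_trans _ _ _ ((hpres_le a ha b hb).2 (le₂_trans _ _ _ hay hyb)) hbz
  · obtain ⟨a, ha, hxa, hay⟩ := hpq
    exact ⟨a, ha, hxa, le₂_trans _ _ _ hay hqr⟩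
  · obtain ⟨a, ha, hxa, hay⟩ := hpq
    exact ⟨a, ha, hxa, le₁_trans _ _ _ hay hqr⟩
  · obtain ⟨a, ha, hxa, hay⟩ := hpq
    obtain ⟨b, hb, hyb, hbz⟩ := hqr
    exact le₂_trans _ _ _ hxa <|
      le₂_trans _ _ _ ((hpres_le a ha b hb).1 (le₁_trans _ _ _ hay hyb)) hbz
  · obtain ⟨a, ha, hya, haz⟩ := hqr
    exact ⟨a, ha, le₂_trans _ _ _ hpq hya, haz⟩
  · exact le₂_trans _ _ _ hpq hqr

theorem glueEqv_le_glueLe (le₁_refl : ∀ x, le₁ x x) (le₂_refl : ∀ x, le₂ x x)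
    (le₁_trans : ∀ x y z, le₁ x y → le₁ y z → le₁ x z)
    (le₂_trans : ∀ x y z, le₂ x y → le₂ y z → le₂ x z)
    (hpres_le : ∀ a ∈ A₁, ∀ b ∈ A₁, (le₁ a b ↔ le₂ (f a) (f b))) :
    glueEqv A₁ f ≤ glueLe A₁ f le₁ le₂ := by
  intro p q h
  have htrans := glueLe_trans (A₁ := A₁) le₁_trans le₂_trans hpres_le
  have hequiv : Equivalence fun p q => glueLe A₁ f le₁ le₂ p q ∧ glueLe A₁ f le₁ le₂ q p :=
    ⟨fun p => ⟨glueLe_refl le₁_refl le₂_refl p, glueLe_refl le₁_refl le₂_refl p⟩,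
      fun h => ⟨h.2, h.1⟩, fun h h' => ⟨htrans _ _ _ h.1 h'.1, htrans _ _ _ h'.2 h.2⟩⟩
  have hgen : glueRel A₁ f ≤ fun p q => glueLe A₁ f le₁ le₂ p q ∧ glueLe A₁ f le₁ le₂ q p := by
    rintro _ _ ⟨a, ha, rfl, rfl⟩
    exact ⟨⟨a, ha, le₁_refl a, le₂_refl _⟩, ⟨a, ha, le₂_refl _, le₁_refl a⟩⟩
  exact (hequiv.eqvGen_iff.1 (Relation.EqvGen.mono hgen _ _ h)).1

theorem sumRel_le_glueLe : sumRel le₁ le₂ ≤ glueLe A₁ f le₁ le₂ := by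
  intro p q h
  rcases p with x | x <;> rcases q with y | y <;> first | exact h | exact h.elim

end glueLe

theorem IsCausalChain.rel_of_mem {le eqv R : α → α → Prop}
    (hR : ∀ a b c, R a b → R b c → R a c) (heqv : eqv ≤ R) (hle : le ≤ R)
    {x y : α} {l : List (α × α)}
    (hl : IsCausalChain le eqv x y l) : ∀ pr ∈ l, R x pr.1 ∧ R pr.2 y := by
  induction l generalizing x with
  | nil => exact absurd rfl hl.1.1
  | cons p l ih =>
    obtain ⟨⟨-, hchain, ⟨first, hhead, hx⟩, ⟨last, hlast, hy⟩⟩, hcausal⟩ := hl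
    intro pr hpr
    obtain rfl : p = first := Option.some_inj.1 hhead
    cases l with
    | nil =>
      obtain rfl : last = _ := Option.some_inj.1 hlast.symm
      obtain rfl := List.mem_singleton.1 hpr
      exact ⟨heqv _ _ hx, heqv _ _ hy⟩
    | cons q l =>
      obtain ⟨hpq, hchain⟩ := List.isChain_cons_cons.1 hchain
      have htail : IsCausalChain le eqv _ y (q :: l) :=
        ⟨⟨List.cons_ne_nil _ _, hchain, ⟨q, rfl, hpq⟩, ⟨last, hlast, hy⟩⟩,
          fun r hr => hcausal r (List.mem_cons_of_mem _ hr)⟩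
      have hxp : R x p.2 := hR _ _ _ (heqv _ _ hx) (hle _ _ (hcausal p List.mem_cons_self))
      rcases List.mem_cons.1 hpr with rfl | hpr
      · have hq := ih htail q List.mem_cons_self
        have hq₁ : R q.1 q.2 := hle _ _ (htail.2 q List.mem_cons_self)
        exact ⟨heqv _ _ hx, hR _ _ _ (hR _ _ _ hq.1 hq₁) hq.2⟩
      · have hpr := ih htail pr hpr
        exact ⟨hR _ _ _ hxp hpr.1, hpr.2⟩

theorem not_le_of_tau_pos {X : Type*} {le : X → X → Prop} {τ : X → X → ENNReal}
    (rev_tri : ∀ x y z, le x y → le y z → τ x y + τ y z ≤ τ x z) {x y : X}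
    (hxx : ¬ 0 < τ x x) (hxy : le x y) (hτ : 0 < τ x y) : ¬ le y x := fun hyx =>
  hxx <| hτ.trans_le <| le_self_add.trans (rev_tri x y x hxy hyx)

theorem amalgamation_chronological_general
    {X₁ X₂ : Type*} (A₁ : Set X₁) (f : X₁ → X₂)
    (ll₁ le₁ : X₁ → X₁ → Prop) (ll₂ le₂ : X₂ → X₂ → Prop)
    (τ₁ : X₁ → X₁ → ENNReal) (τ₂ : X₂ → X₂ → ENNReal)
    (le₁_refl : ∀ x, le₁ x x) (le₁_trans : ∀ x y z, le₁ x y → le₁ y z → le₁ x z)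
    (le₂_refl : ∀ x, le₂ x x) (le₂_trans : ∀ x y z, le₂ x y → le₂ y z → le₂ x z)
    (rev_tri₁ : ∀ x y z, le₁ x y → le₁ y z → τ₁ x y + τ₁ y z ≤ τ₁ x z)
    (rev_tri₂ : ∀ x y z, le₂ x y → le₂ y z → τ₂ x y + τ₂ y z ≤ τ₂ x z)
    (ll₁_iff : ∀ x y, ll₁ x y ↔ 0 < τ₁ x y) (ll₂_iff : ∀ x y, ll₂ x y ↔ 0 < τ₂ x y)
    (hpres_le : ∀ a ∈ A₁, ∀ b ∈ A₁, (le₁ a b ↔ le₂ (f a) (f b)))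
    (chron₁ : ∀ x, ¬ ll₁ x x) (chron₂ : ∀ x, ¬ ll₂ x x)
    :
    ∀ p : X₁ ⊕ X₂, ¬ 0 < quotTau (sumTau τ₁ τ₂) (sumRel le₁ le₂) (glueEqv A₁ f) p p := by
  intro p hpos
  obtain ⟨_, ⟨l, hl, rfl⟩, hsum⟩ := lt_sSup_iff.1 hpos
  obtain ⟨pr, hpr, hτ⟩ : ∃ pr ∈ l, 0 < sumTau τ₁ τ₂ pr.1 pr.2 := by
    simpa only [pos_iff_ne_zero, ne_eq, List.sum_eq_zero_iff, List.forall_mem_map, not_forall,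
      exists_prop] using hsum
  have htrans := glueLe_trans (A₁ := A₁) le₁_trans le₂_trans hpres_le
  have hback : glueLe A₁ f le₁ le₂ pr.2 pr.1 := by
    obtain ⟨hp, hp'⟩ := hl.rel_of_mem htrans
      (glueEqv_le_glueLe le₁_refl le₂_refl le₁_trans le₂_trans hpres_le) sumRel_le_glueLe pr hpr
    exact htrans _ _ _ hp' hp
  have hfwd := hl.2 pr hpr
  rcases pr with ⟨x | x, y | y⟩
  · exact not_le_of_tau_pos rev_tri₁ (mt (ll₁_iff x x).2 (chron₁ x)) hfwd hτ hback
  · exact hfwd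
  · exact hfwd
  · exact not_le_of_tau_pos rev_tri₂ (mt (ll₂_iff x x).2 (chron₂ x)) hfwd hτ hback

/-- If `X₁` and `X₂` are chronological Lorentzian pre-length spaces, then their
Lorentzian amalgamation is chronological: the quotient timelike relation
`[x] ≪̃ [y] ⟺ τ̃([x],[y]) > 0` is irreflexive. -/
theorem amalgamation_chronological
    {X₁ X₂ : Type*} [MetricSpace X₁] [MetricSpace X₂]
    (A₁ : Set X₁) (A₂ : Set X₂) (hA₁ : IsClosed A₁) (hA₂ : IsClosed A₂)
    (f : X₁ → X₂) (g : X₂ → X₁) (hf : Set.BijOn f A₁ A₂)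
    (hgf : ∀ a ∈ A₁, g (f a) = a) (hfc : ContinuousOn f A₁) (hgc : ContinuousOn g A₂)
    (hlip : ∀ a ∈ A₁, ∃ ε > (0:ℝ), ∃ K : NNReal, ∀ x ∈ A₁ ∩ Metric.ball a ε,
      ∀ y ∈ A₁ ∩ Metric.ball a ε,
        dist (f x) (f y) ≤ K * dist x y ∧ dist x y ≤ K * dist (f x) (f y))
    (ll₁ le₁ : X₁ → X₁ → Prop) (ll₂ le₂ : X₂ → X₂ → Prop)
    (τ₁ : X₁ → X₁ → ENNReal) (τ₂ : X₂ → X₂ → ENNReal)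
    (le₁_refl : ∀ x, le₁ x x) (le₁_trans : ∀ x y z, le₁ x y → le₁ y z → le₁ x z)
    (le₂_refl : ∀ x, le₂ x x) (le₂_trans : ∀ x y z, le₂ x y → le₂ y z → le₂ x z)
    (ll₁_trans : ∀ x y z, ll₁ x y → ll₁ y z → ll₁ x z)
    (ll₂_trans : ∀ x y z, ll₂ x y → ll₂ y z → ll₂ x z)
    (ll₁_le : ∀ x y, ll₁ x y → le₁ x y) (ll₂_le : ∀ x y, ll₂ x y → le₂ x y)
    (τ₁_lsc : LowerSemicontinuous fun p : X₁ × X₁ => τ₁ p.1 p.2)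
    (τ₂_lsc : LowerSemicontinuous fun p : X₂ × X₂ => τ₂ p.1 p.2)
    (rev_tri₁ : ∀ x y z, le₁ x y → le₁ y z → τ₁ x y + τ₁ y z ≤ τ₁ x z)
    (rev_tri₂ : ∀ x y z, le₂ x y → le₂ y z → τ₂ x y + τ₂ y z ≤ τ₂ x z)
    (ll₁_iff : ∀ x y, ll₁ x y ↔ 0 < τ₁ x y) (ll₂_iff : ∀ x y, ll₂ x y ↔ 0 < τ₂ x y)
    (ntli₁_future : ∀ a ∈ A₁, (∃ q, ll₁ a q) → ∀ U ∈ nhds a, ∃ b ∈ U ∩ A₁, ll₁ a b)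
    (ntli₁_past : ∀ a ∈ A₁, (∃ q, ll₁ q a) → ∀ U ∈ nhds a, ∃ b ∈ U ∩ A₁, ll₁ b a)
    (ntli₂_future : ∀ a ∈ A₂, (∃ q, ll₂ a q) → ∀ U ∈ nhds a, ∃ b ∈ U ∩ A₂, ll₂ a b)
    (ntli₂_past : ∀ a ∈ A₂, (∃ q, ll₂ q a) → ∀ U ∈ nhds a, ∃ b ∈ U ∩ A₂, ll₂ b a)
    (hpres_le : ∀ a ∈ A₁, ∀ b ∈ A₁, (le₁ a b ↔ le₂ (f a) (f b)))
    (hpres_ll : ∀ a ∈ A₁, ∀ b ∈ A₁, (ll₁ a b ↔ ll₂ (f a) (f b)))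
    (hpres_tau : ∀ a ∈ A₁, ∀ b ∈ A₁, τ₁ a b = τ₂ (f a) (f b))
    (hcompat : ∀ a ∈ A₁, ((∃ q, ll₁ a q) ↔ (∃ q, ll₂ (f a) q)) ∧
      ((∃ q, ll₁ q a) ↔ (∃ q, ll₂ q (f a))))
    (chron₁ : ∀ x, ¬ ll₁ x x) (chron₂ : ∀ x, ¬ ll₂ x x)
    :
    ∀ p : X₁ ⊕ X₂, ¬ 0 < quotTau (sumTau τ₁ τ₂) (sumRel le₁ le₂) (glueEqv A₁ f) p p :=
  amalgamation_chronological_general A₁ f ll₁ le₁ ll₂ le₂ τ₁ τ₂ le₁_refl le₁_trans le₂_refl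
    le₂_trans rev_tri₁ rev_tri₂ ll₁_iff ll₂_iff hpres_le chron₁ chron₂
end

section
/- If X₁ and X₂ are causal Lorentzian pre-length spaces (≤ᵢ antisymmetric), then their Lorentzian amalgamation X = X₁ ⊔_A X₂ is causal: the quotient relation ≤̃ is antisymmetric. -/
open Set Metric

variable {α : Type*}

/-- Explicit description of the combined causal relation on the disjoint union. -/
def amalLe {X₁ X₂ : Type*} (A₁ : Set X₁) (f : X₁ → X₂)
    (le₁ : X₁ → X₁ → Prop) (le₂ : X₂ → X₂ → Prop) : X₁ ⊕ X₂ → X₁ ⊕ X₂ → Prop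
  | Sum.inl x, Sum.inl y => le₁ x y
  | Sum.inl x, Sum.inr y => ∃ a ∈ A₁, le₁ x a ∧ le₂ (f a) y
  | Sum.inr x, Sum.inl y => ∃ a ∈ A₁, le₂ x (f a) ∧ le₁ a y
  | Sum.inr x, Sum.inr y => le₂ x y

/-- Explicit description of the gluing equivalence. -/
lemma glueEqv_iff {X₁ X₂ : Type*} {A₁ : Set X₁} {f : X₁ → X₂} (hinj : Set.InjOn f A₁)
    (p q : X₁ ⊕ X₂) :
    glueEqv A₁ f p q ↔ p = q ∨ (∃ a ∈ A₁, p = Sum.inl a ∧ q = Sum.inr (f a)) ∨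
      (∃ a ∈ A₁, q = Sum.inl a ∧ p = Sum.inr (f a)) := by
  constructor
  · intro h
    induction h with
    | rel p q h => exact Or.inr (Or.inl h)
    | refl p => exact Or.inl rfl
    | symm p q _ ih =>
        rcases ih with h | h | h
        · exact Or.inl h.symm
        · exact Or.inr (Or.inr h)
        · exact Or.inr (Or.inl h)
    | trans p q r _ _ ih₁ ih₂ =>
        rcases ih₁ with h | ⟨a, ha, hp, hq⟩ | ⟨a, ha, hq, hp⟩
        · subst h; exact ih₂
        · rcases ih₂ with h | ⟨b, hb, hq', hr⟩ | ⟨b, hb, hr, hq'⟩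
          · subst h; exact Or.inr (Or.inl ⟨a, ha, hp, hq⟩)
          · rw [hq] at hq'; exact absurd hq' (by simp)
          · rw [hq] at hq'
            have : f a = f b := by injection hq'
            have hba : a = b := hinj ha hb this
            subst hba; rw [hp, hr]; exact Or.inl rfl
        · rcases ih₂ with h | ⟨b, hb, hq', hr⟩ | ⟨b, hb, hr, hq'⟩
          · subst h; exact Or.inr (Or.inr ⟨a, ha, hq, hp⟩)
          · rw [hq] at hq'
            have : a = b := by injection hq'
            subst this; rw [hp, hr]; exact Or.inl rfl
          · rw [hq] at hq'; exact absurd hq' (by simp)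
  · rintro (rfl | ⟨a, ha, rfl, rfl⟩ | ⟨a, ha, rfl, rfl⟩)
    · exact Relation.EqvGen.refl _
    · exact Relation.EqvGen.rel _ _ ⟨a, ha, rfl, rfl⟩
    · exact Relation.EqvGen.symm _ _ (Relation.EqvGen.rel _ _ ⟨a, ha, rfl, rfl⟩)

/-- **Causality of the amalgamation**: if `X₁` and `X₂` are causal (the causal relations
are antisymmetric), then the quotient causal relation of the amalgamation is
antisymmetric (as a relation on the quotient, i.e. up to the gluing equivalence). -/
theorem amalgamation_causal {X₁ X₂ : Type*}
    (A₁ : Set X₁) (A₂ : Set X₂) (f : X₁ → X₂) (hf : Set.BijOn f A₁ A₂)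
    (le₁ : X₁ → X₁ → Prop) (le₂ : X₂ → X₂ → Prop)
    (le₁_refl : ∀ x, le₁ x x) (le₁_trans : ∀ x y z, le₁ x y → le₁ y z → le₁ x z)
    (le₂_refl : ∀ x, le₂ x x) (le₂_trans : ∀ x y z, le₂ x y → le₂ y z → le₂ x z)
    (le₁_antisymm : ∀ x y, le₁ x y → le₁ y x → x = y)
    (le₂_antisymm : ∀ x y, le₂ x y → le₂ y x → x = y)
    (hpres : ∀ a ∈ A₁, ∀ b ∈ A₁, (le₁ a b ↔ le₂ (f a) (f b))) :
    ∀ x y : X₁ ⊕ X₂,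
      quotRel (sumRel le₁ le₂) (glueEqv A₁ f) x y →
      quotRel (sumRel le₁ le₂) (glueEqv A₁ f) y x →
      glueEqv A₁ f x y := by
  have hinj : Set.InjOn f A₁ := hf.injOn
  set L := amalLe A₁ f le₁ le₂ with hL
  -- amalLe is transitive
  have Ltrans : ∀ p q r, L p q → L q r → L p r := by
    rintro (x | x) (y | y) (z | z) h₁ h₂
    · exact le₁_trans _ _ _ h₁ h₂
    · obtain ⟨a, ha, hya, haz⟩ := h₂
      exact ⟨a, ha, le₁_trans _ _ _ h₁ hya, haz⟩
    · obtain ⟨a, ha, hxa, hay⟩ := h₁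
      obtain ⟨b, hb, hyb, hbz⟩ := h₂
      have : le₁ a b := (hpres a ha b hb).2 (le₂_trans _ _ _ hay hyb)
      exact le₁_trans _ _ _ hxa (le₁_trans _ _ _ this hbz)
    · obtain ⟨a, ha, hxa, hay⟩ := h₁
      exact ⟨a, ha, hxa, le₂_trans _ _ _ hay h₂⟩
    · obtain ⟨a, ha, hxa, hay⟩ := h₁
      exact ⟨a, ha, hxa, le₁_trans _ _ _ hay h₂⟩
    · obtain ⟨a, ha, hxa, hay⟩ := h₁
      obtain ⟨b, hb, hyb, hbz⟩ := h₂
      have : le₂ (f a) (f b) := (hpres a ha b hb).1 (le₁_trans _ _ _ hay hyb)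
      exact le₂_trans _ _ _ hxa (le₂_trans _ _ _ this hbz)
    · obtain ⟨a, ha, hya, haz⟩ := h₂
      exact ⟨a, ha, le₂_trans _ _ _ h₁ hya, haz⟩
    · exact le₂_trans _ _ _ h₁ h₂
  -- eqv compatibility on the left
  have Lleft : ∀ p p' q, glueEqv A₁ f p p' → L p' q → L p q := by
    intro p p' q h hpq
    rcases (glueEqv_iff hinj p p').1 h with rfl | ⟨a, ha, rfl, rfl⟩ | ⟨a, ha, rfl, rfl⟩
    · exact hpq
    · rcases q with y | y
      · obtain ⟨b, hb, hab, hby⟩ := hpq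
        exact le₁_trans _ _ _ ((hpres a ha b hb).2 hab) hby
      · exact ⟨a, ha, le₁_refl a, hpq⟩
    · rcases q with y | y
      · exact ⟨a, ha, le₂_refl _, hpq⟩
      · obtain ⟨b, hb, hab, hby⟩ := hpq
        exact le₂_trans _ _ _ ((hpres a ha b hb).1 hab) hby
  -- eqv compatibility on the right
  have Lright : ∀ p q' q, L p q' → glueEqv A₁ f q' q → L p q := by
    intro p q' q hpq h
    rcases (glueEqv_iff hinj q' q).1 h with rfl | ⟨a, ha, rfl, rfl⟩ | ⟨a, ha, rfl, rfl⟩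
    · exact hpq
    · rcases p with x | x
      · exact ⟨a, ha, hpq, le₂_refl _⟩
      · obtain ⟨b, hb, hxb, hba⟩ := hpq
        exact le₂_trans _ _ _ hxb ((hpres b hb a ha).1 hba)
    · rcases p with x | x
      · obtain ⟨b, hb, hxb, hba⟩ := hpq
        exact le₁_trans _ _ _ hxb ((hpres b hb a ha).2 hba)
      · exact ⟨a, ha, hpq, le₁_refl a⟩
  -- sumRel is contained in L
  have hsum : ∀ p q, sumRel le₁ le₂ p q → L p q := by
    rintro (x | x) (y | y) h
    · exact h
    · exact h.elim
    · exact h.elim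
    · exact h
  -- quotRel implies L
  have hquot : ∀ p q, quotRel (sumRel le₁ le₂) (glueEqv A₁ f) p q → L p q := by
    intro p q h
    induction h with
    | single h =>
        obtain ⟨p', q', h₁, h₂, h₃⟩ := h
        exact Lright _ _ _ (Lleft _ _ _ h₁ (hsum _ _ h₂)) h₃
    | tail _ h ih =>
        obtain ⟨p', q', h₁, h₂, h₃⟩ := h
        exact Lright _ _ _ (Ltrans _ _ _ ih (Lleft _ _ _ h₁ (hsum _ _ h₂))) h₃
  -- antisymmetry of L up to glueEqv
  rintro (x | x) (y | y) hxy hyx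
  · have h₁ := hquot _ _ hxy
    have h₂ := hquot _ _ hyx
    have : x = y := le₁_antisymm _ _ h₁ h₂
    subst this; exact Relation.EqvGen.refl _
  · obtain ⟨a, ha, hxa, hay⟩ := hquot _ _ hxy
    obtain ⟨b, hb, hyb, hbx⟩ := hquot _ _ hyx
    have hab : le₁ a b := (hpres a ha b hb).2 (le₂_trans _ _ _ hay hyb)
    have hxa' : x = a := le₁_antisymm _ _ hxa (le₁_trans _ _ _ hab hbx)
    have hba : a = b := le₁_antisymm _ _ hab (le₁_trans _ _ _ hbx hxa)
    have hy : y = f a := le₂_antisymm _ _ (by rw [hba]; exact hyb) hay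
    rw [hxa', hy]
    exact Relation.EqvGen.rel _ _ ⟨a, ha, rfl, rfl⟩
  · obtain ⟨a, ha, hxa, hay⟩ := hquot _ _ hxy
    obtain ⟨b, hb, hyb, hbx⟩ := hquot _ _ hyx
    have hab : le₁ a b := le₁_trans _ _ _ hay hyb
    have hfab : le₂ (f a) (f b) := (hpres a ha b hb).1 hab
    have hx : x = f a := le₂_antisymm _ _ hxa (le₂_trans _ _ _ hfab hbx)
    have hfba : f a = f b := le₂_antisymm _ _ hfab (le₂_trans _ _ _ hbx hxa)
    have hba : a = b := hinj ha hb hfba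
    have hya : le₁ y a := by rw [hba]; exact hyb
    have hy : y = a := le₁_antisymm _ _ hya hay
    rw [hx, hy]
    exact Relation.EqvGen.symm _ _ (Relation.EqvGen.rel _ _ ⟨a, ha, rfl, rfl⟩)
  · have h₁ := hquot _ _ hxy
    have h₂ := hquot _ _ hyx
    have : x = y := le₂_antisymm _ _ h₁ h₂
    subst this; exact Relation.EqvGen.refl _
end

section
/- In a causally path-connected Lorentzian pre-length space X with no ≪-isolated points (I⁺(x) ≠ ∅ ≠ I⁻(x) for all x), strong causality is equivalent to: for every x ∈ X and every neighbourhood U of x there exists a neighbourhood V ⊆ U of x such that every causal curve with endpoints in V is contained in U. -/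
open Set

/-- A future-directed causal curve: a locally Lipschitz curve `γ : [a,b] → X`
that is monotone with respect to the causal relation `R`. -/
def IsCausalCurve {X : Type*} [MetricSpace X] (R : X → X → Prop)
    (γ : ℝ → X) (a b : ℝ) : Prop :=
  a ≤ b ∧
  (∀ t ∈ Set.Icc a b, ∃ K : NNReal, ∃ ε > (0:ℝ), ∀ s ∈ Set.Icc a b, ∀ s' ∈ Set.Icc a b,
      |s - t| < ε → |s' - t| < ε → dist (γ s) (γ s') ≤ K * |s - s'|) ∧
  ∀ s ∈ Set.Icc a b, ∀ t ∈ Set.Icc a b, s < t → R (γ s) (γ t)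


section AuxSC
open TopologicalSpace
variable {X : Type*} [MetricSpace X] {ll le : X → X → Prop} {tau : X → X → ENNReal}

lemma diamond_open (tau_lsc : LowerSemicontinuous fun p : X × X => tau p.1 p.2)
    (ll_iff : ∀ x y, ll x y ↔ 0 < tau x y) (p q : X) :
    IsOpen {z | ll p z ∧ ll z q} := by
  have h1 : IsOpen {w : X × X | 0 < tau w.1 w.2} := by
    have := (lowerSemicontinuous_iff_isOpen_preimage.1 tau_lsc) 0
    simpa [Set.preimage, Set.Ioi] using this
  have h2 : IsOpen {z | ll p z} := by
    have e : {z | ll p z} = (fun z => ((p, z) : X × X)) ⁻¹' {w | 0 < tau w.1 w.2} := by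
      ext z; simp [ll_iff]
    rw [e]; exact h1.preimage (continuous_const.prodMk continuous_id)
  have h3 : IsOpen {z | ll z q} := by
    have e : {z | ll z q} = (fun z => ((z, q) : X × X)) ⁻¹' {w | 0 < tau w.1 w.2} := by
      ext z; simp [ll_iff]
    rw [e]; exact h1.preimage (continuous_id.prodMk continuous_const)
  exact h2.inter h3

lemma exists_past (cpc : ∀ x y, ll x y → ∃ γ a b, IsCausalCurve ll γ a b ∧ γ a = x ∧ γ b = y)
    {x p0 : X} (hp0 : ll p0 x) {W : Set X} (hW : IsOpen W) (hx : x ∈ W) :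
    ∃ p, ll p x ∧ p ∈ W := by
  obtain ⟨γ, a, b, ⟨hab, hlip, hmono⟩, ha, hb⟩ := cpc p0 x hp0
  rcases eq_or_lt_of_le hab with rfl | hab'
  · have hpx : p0 = x := by rw [← ha, hb]
    exact ⟨x, hpx ▸ hp0, hx⟩
  · obtain ⟨K, ε, hε, hK⟩ := hlip b ⟨hab, le_refl b⟩
    obtain ⟨δ, hδ, hball⟩ := Metric.isOpen_iff.1 hW x hx
    set m := min ε (δ / (K + 1)) with hm
    have hK0 : (0:ℝ) ≤ K := K.coe_nonneg
    have hm0 : 0 < m := lt_min hε (by positivity)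
    set t := max a (b - m / 2) with htdef
    have htb : t < b := max_lt hab' (by linarith)
    have hta : a ≤ t := le_max_left _ _
    have htmem : t ∈ Set.Icc a b := ⟨hta, htb.le⟩
    have hdist : |t - b| < ε := by
      have h1 : b - m / 2 ≤ t := le_max_right _ _
      rw [abs_of_nonpos (by linarith)]
      have := min_le_left ε (δ / (K + 1))
      linarith
    have hd := hK t htmem b ⟨hab, le_refl b⟩ hdist (by simpa using hε)
    refine ⟨γ t, by rw [← hb]; exact hmono t htmem b ⟨hab, le_refl b⟩ htb, hball ?_⟩
    have h1 : b - m / 2 ≤ t := le_max_right _ _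
    have h2 : |t - b| ≤ m / 2 := by rw [abs_of_nonpos (by linarith)]; linarith
    have h3 : m ≤ δ / (K + 1) := min_le_right _ _
    have h4 : (K:ℝ) * |t - b| < δ := by
      have : (K:ℝ) * |t - b| ≤ (K + 1) * (m / 2) := by nlinarith [abs_nonneg (t - b)]
      have h5 : (K + 1 : ℝ) * (δ / (K + 1)) = δ := by field_simp
      nlinarith
    simp only [Metric.mem_ball]
    calc dist (γ t) x = dist (γ t) (γ b) := by rw [hb]
      _ ≤ K * |t - b| := hd
      _ < δ := h4

lemma exists_future (cpc : ∀ x y, ll x y → ∃ γ a b, IsCausalCurve ll γ a b ∧ γ a = x ∧ γ b = y)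
    {x q0 : X} (hq0 : ll x q0) {W : Set X} (hW : IsOpen W) (hx : x ∈ W) :
    ∃ q, ll x q ∧ q ∈ W := by
  obtain ⟨γ, a, b, ⟨hab, hlip, hmono⟩, ha, hb⟩ := cpc x q0 hq0
  rcases eq_or_lt_of_le hab with rfl | hab'
  · have hpx : q0 = x := by rw [← hb, ha]
    exact ⟨x, hpx ▸ hq0, hx⟩
  · obtain ⟨K, ε, hε, hK⟩ := hlip a ⟨le_refl a, hab⟩
    obtain ⟨δ, hδ, hball⟩ := Metric.isOpen_iff.1 hW x hx
    set m := min ε (δ / (K + 1)) with hm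
    have hK0 : (0:ℝ) ≤ K := K.coe_nonneg
    have hm0 : 0 < m := lt_min hε (by positivity)
    set t := min b (a + m / 2) with htdef
    have hta : a < t := lt_min hab' (by linarith)
    have htb : t ≤ b := min_le_left _ _
    have htmem : t ∈ Set.Icc a b := ⟨hta.le, htb⟩
    have hdist : |t - a| < ε := by
      have h1 : t ≤ a + m / 2 := min_le_right _ _
      rw [abs_of_nonneg (by linarith)]
      have := min_le_left ε (δ / (K + 1))
      linarith
    have hd := hK t htmem a ⟨le_refl a, hab⟩ hdist (by simpa using hε)
    refine ⟨γ t, by rw [← ha]; exact hmono a ⟨le_refl a, hab⟩ t htmem hta, hball ?_⟩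
    have h1 : t ≤ a + m / 2 := min_le_right _ _
    have h2 : |t - a| ≤ m / 2 := by rw [abs_of_nonneg (by linarith)]; linarith
    have h3 : m ≤ δ / (K + 1) := min_le_right _ _
    have h4 : (K:ℝ) * |t - a| < δ := by
      have : (K:ℝ) * |t - a| ≤ (K + 1) * (m / 2) := by nlinarith [abs_nonneg (t - a)]
      have h5 : (K + 1 : ℝ) * (δ / (K + 1)) = δ := by field_simp
      nlinarith
    simp only [Metric.mem_ball]
    calc dist (γ t) x = dist (γ t) (γ a) := by rw [ha]
      _ ≤ K * |t - a| := hd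
      _ < δ := h4

section
variable {R : X → X → Prop}
lemma causal_concat (htrans : ∀ x y z, R x y → R y z → R x z)
    {γ1 γ2 : ℝ → X} {a1 b1 a2 b2 : ℝ}
    (h1 : IsCausalCurve R γ1 a1 b1) (h2 : IsCausalCurve R γ2 a2 b2)
    (hjoin : γ1 b1 = γ2 a2) :
    ∃ γ B, IsCausalCurve R γ a1 B ∧ γ a1 = γ1 a1 ∧ γ B = γ2 b2 ∧ b1 ∈ Set.Icc a1 B ∧ γ b1 = γ1 b1 := by
  obtain ⟨hab1, hlip1, hmono1⟩ := h1
  obtain ⟨hab2, hlip2, hmono2⟩ := h2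
  set B := b1 + (b2 - a2) with hB
  set γ : ℝ → X := fun t => if t ≤ b1 then γ1 t else γ2 (t - b1 + a2) with hγ
  have hb1B : b1 ≤ B := by simp [hB]; linarith
  have ha1B : a1 ≤ B := le_trans hab1 hb1B
  -- membership translations
  have hmem1 : ∀ s, s ∈ Set.Icc a1 B → s ≤ b1 → s ∈ Set.Icc a1 b1 := fun s hs h => ⟨hs.1, h⟩
  have hmem2 : ∀ s, s ∈ Set.Icc a1 B → b1 < s → (s - b1 + a2) ∈ Set.Icc a2 b2 := by
    intro s hs h
    have h2 := hs.2
    rw [hB] at h2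
    exact ⟨by linarith, by linarith⟩
  have hval1 : ∀ s, s ≤ b1 → γ s = γ1 s := by intro s h; simp [hγ, h]
  have hval2 : ∀ s, b1 < s → γ s = γ2 (s - b1 + a2) := by
    intro s h; simp [hγ, not_le.2 h]
  have hγB : γ B = γ2 b2 := by
    rcases le_or_gt B b1 with h | h
    · have hb2 : b2 = a2 := by simp [hB] at h; linarith
      rw [hval1 _ h]
      have : B = b1 := by simp [hB, hb2]
      rw [this, hjoin, hb2]
    · rw [hval2 _ h]; congr 1; rw [hB]; ring
  refine ⟨γ, B, ⟨ha1B, ?_, ?_⟩, hval1 _ hab1, hγB, ⟨hab1, hb1B⟩, hval1 _ (le_refl b1)⟩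
  · -- Lipschitz
    intro t ht
    rcases lt_trichotomy t b1 with htl | heq | htr
    · obtain ⟨K, ε, hε, hK⟩ := hlip1 t ⟨ht.1, htl.le⟩
      refine ⟨K, min ε (b1 - t), lt_min hε (by linarith), ?_⟩
      intro s hs s' hs' h h'
      have hsle : s ≤ b1 := by have := lt_of_abs_lt (lt_of_lt_of_le h (min_le_right _ _)); linarith
      have hsle' : s' ≤ b1 := by have := lt_of_abs_lt (lt_of_lt_of_le h' (min_le_right _ _)); linarith
      rw [hval1 _ hsle, hval1 _ hsle']
      exact hK s (hmem1 s hs hsle) s' (hmem1 s' hs' hsle')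
        (lt_of_lt_of_le h (min_le_left _ _)) (lt_of_lt_of_le h' (min_le_left _ _))
    · rw [heq]
      obtain ⟨K1, ε1, hε1, hK1⟩ := hlip1 b1 ⟨hab1, le_refl b1⟩
      obtain ⟨K2, ε2, hε2, hK2⟩ := hlip2 a2 ⟨le_refl a2, hab2⟩
      refine ⟨K1 + K2, min ε1 ε2, lt_min hε1 hε2, ?_⟩
      have key : ∀ s ∈ Set.Icc a1 B, ∀ s' ∈ Set.Icc a1 B,
          |s - b1| < min ε1 ε2 → |s' - b1| < min ε1 ε2 → s ≤ s' →
          dist (γ s) (γ s') ≤ (K1 + K2 : NNReal) * |s - s'| := by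
        intro s hs s' hs' h h' hss
        have h1' : |s - b1| < ε1 := lt_of_lt_of_le h (min_le_left _ _)
        have h2' : |s - b1| < ε2 := lt_of_lt_of_le h (min_le_right _ _)
        have h1'' : |s' - b1| < ε1 := lt_of_lt_of_le h' (min_le_left _ _)
        have h2'' : |s' - b1| < ε2 := lt_of_lt_of_le h' (min_le_right _ _)
        push_cast
        have hK10 : (0:ℝ) ≤ K1 := K1.coe_nonneg
        have hK20 : (0:ℝ) ≤ K2 := K2.coe_nonneg
        rcases le_or_gt s' b1 with hb' | hb'
        · have hb : s ≤ b1 := le_trans hss hb'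
          rw [hval1 _ hb, hval1 _ hb']
          have := hK1 s (hmem1 s hs hb) s' (hmem1 s' hs' hb') h1' h1''
          nlinarith [abs_nonneg (s - s')]
        · rcases le_or_gt s b1 with hb | hb
          · -- mixed case
            rw [hval1 _ hb, hval2 _ hb']
            have e1 : dist (γ1 s) (γ2 (s' - b1 + a2)) ≤
                dist (γ1 s) (γ1 b1) + dist (γ2 a2) (γ2 (s' - b1 + a2)) := by
              calc dist (γ1 s) (γ2 (s' - b1 + a2))
                  ≤ dist (γ1 s) (γ1 b1) + dist (γ1 b1) (γ2 (s' - b1 + a2)) := dist_triangle _ _ _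
                _ = dist (γ1 s) (γ1 b1) + dist (γ2 a2) (γ2 (s' - b1 + a2)) := by rw [hjoin]
            have e2 := hK1 s (hmem1 s hs hb) b1 ⟨hab1, le_refl b1⟩ h1' (by simpa using hε1)
            have e3 := hK2 a2 ⟨le_refl a2, hab2⟩ (s' - b1 + a2) (hmem2 s' hs' hb')
              (by simpa using hε2) (by rw [show s' - b1 + a2 - a2 = s' - b1 by ring]; exact h2'')
            have f1 : |s - b1| ≤ |s - s'| := by
              rw [abs_of_nonpos (by linarith), abs_of_nonpos (by linarith)]; linarith
            have f2 : |a2 - (s' - b1 + a2)| ≤ |s - s'| := by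
              rw [show a2 - (s' - b1 + a2) = -(s' - b1) by ring, abs_neg,
                abs_of_nonneg (by linarith), abs_of_nonpos (by linarith)]
              linarith
            nlinarith [abs_nonneg (s - s')]
          · rw [hval2 _ hb, hval2 _ hb']
            have := hK2 (s - b1 + a2) (hmem2 s hs hb) (s' - b1 + a2) (hmem2 s' hs' hb')
              (by rw [show s - b1 + a2 - a2 = s - b1 by ring]; exact h2')
              (by rw [show s' - b1 + a2 - a2 = s' - b1 by ring]; exact h2'')
            have e : |s - b1 + a2 - (s' - b1 + a2)| = |s - s'| := by congr 1; ring
            rw [e] at this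
            nlinarith [abs_nonneg (s - s')]
      intro s hs s' hs' h h'
      rcases le_total s s' with hss | hss
      · exact key s hs s' hs' h h' hss
      · rw [dist_comm, abs_sub_comm]; exact key s' hs' s hs h' h hss
    · obtain ⟨K, ε, hε, hK⟩ := hlip2 (t - b1 + a2) (hmem2 t ht htr)
      refine ⟨K, min ε (t - b1), lt_min hε (by linarith), ?_⟩
      intro s hs s' hs' h h'
      have hsg : b1 < s := by have := lt_of_abs_lt (lt_of_lt_of_le h (min_le_right _ _)); cases abs_lt.1 (lt_of_lt_of_le h (min_le_right _ _)) with | intro l r => linarith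
      have hsg' : b1 < s' := by cases abs_lt.1 (lt_of_lt_of_le h' (min_le_right _ _)) with | intro l r => linarith
      rw [hval2 _ hsg, hval2 _ hsg']
      have e1 : |s - b1 + a2 - (t - b1 + a2)| = |s - t| := by congr 1; ring
      have e2 : |s' - b1 + a2 - (t - b1 + a2)| = |s' - t| := by congr 1; ring
      have e3 : |s - b1 + a2 - (s' - b1 + a2)| = |s - s'| := by congr 1; ring
      have := hK (s - b1 + a2) (hmem2 s hs hsg) (s' - b1 + a2) (hmem2 s' hs' hsg')
        (by rw [e1]; exact lt_of_lt_of_le h (min_le_left _ _))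
        (by rw [e2]; exact lt_of_lt_of_le h' (min_le_left _ _))
      rwa [e3] at this
  · -- monotone
    intro s hs t ht hst
    rcases le_or_gt t b1 with htb | htb
    · have hsb : s ≤ b1 := le_trans hst.le htb
      rw [hval1 _ hsb, hval1 _ htb]
      exact hmono1 s ⟨hs.1, hsb⟩ t ⟨le_trans hs.1 hst.le, htb⟩ hst
    · rw [hval2 _ htb]
      rcases le_or_gt s b1 with hsb | hsb
      · rcases lt_or_eq_of_le hsb with hsb' | hsb'
        · rw [hval1 _ hsb]
          refine htrans _ _ _ (hmono1 s ⟨hs.1, hsb⟩ b1 ⟨hab1, le_refl _⟩ hsb') ?_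
          rw [hjoin]
          exact hmono2 a2 ⟨le_refl _, hab2⟩ _ (hmem2 t ht htb) (by linarith)
        · rw [hval1 _ hsb, hsb', hjoin]
          exact hmono2 a2 ⟨le_refl _, hab2⟩ _ (hmem2 t ht htb) (by linarith)
      · rw [hval2 _ hsb]
        exact hmono2 _ (hmem2 s hs hsb) _ (hmem2 t ht htb) (by linarith)

end

lemma aux_pushup (rev_tri : ∀ x y z, le x y → le y z → tau x y + tau y z ≤ tau x z)
    (ll_le : ∀ x y, ll x y → le x y) (ll_iff : ∀ x y, ll x y ↔ 0 < tau x y)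
    {p y z : X} (h1 : ll p y) (h2 : le y z) : ll p z := by
  refine (ll_iff p z).2 (lt_of_lt_of_le ((ll_iff p y).1 h1)
    (le_trans le_self_add (rev_tri p y z (ll_le p y h1) h2)))

lemma aux_pushdown (rev_tri : ∀ x y z, le x y → le y z → tau x y + tau y z ≤ tau x z)
    (ll_le : ∀ x y, ll x y → le x y) (ll_iff : ∀ x y, ll x y ↔ 0 < tau x y)
    {z y q : X} (h1 : le z y) (h2 : ll y q) : ll z q := by
  refine (ll_iff z q).2 (lt_of_lt_of_le ((ll_iff y q).1 h2)
    (le_trans le_add_self (rev_tri z y q h1 (ll_le y q h2))))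

lemma aux_causal_of_timelike (ll_le : ∀ x y, ll x y → le x y) {γ : ℝ → X} {a b : ℝ}
    (h : IsCausalCurve ll γ a b) : IsCausalCurve le γ a b :=
  ⟨h.1, h.2.1, fun s hs t ht hst => ll_le _ _ (h.2.2 s hs t ht hst)⟩

lemma diamond_basis
    (tau_lsc : LowerSemicontinuous fun p : X × X => tau p.1 p.2)
    (ll_iff : ∀ x y, ll x y ↔ 0 < tau x y)
    (ll_trans : ∀ x y z, ll x y → ll y z → ll x z)
    (cpc_timelike : ∀ x y, ll x y → ∃ γ a b, IsCausalCurve ll γ a b ∧ γ a = x ∧ γ b = y)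
    (no_isolated : ∀ x : X, (∃ q, ll x q) ∧ (∃ q, ll q x))
    {O : Set X} (hO : GenerateOpen {S | ∃ x y, S = {z | ll x z ∧ ll z y}} O) :
    ∀ x ∈ O, ∃ p q, ll p x ∧ ll x q ∧ {z | ll p z ∧ ll z q} ⊆ O := by
  induction hO with
  | basic s hs =>
    obtain ⟨p0, q0, rfl⟩ := hs
    intro x hx
    obtain ⟨p, hpx, hpW⟩ := exists_past cpc_timelike hx.1 (diamond_open tau_lsc ll_iff p0 q0) hx
    obtain ⟨q, hxq, hqW⟩ := exists_future cpc_timelike hx.2 (diamond_open tau_lsc ll_iff p0 q0) hx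
    exact ⟨p, q, hpx, hxq, fun z hz =>
      ⟨ll_trans _ _ _ hpW.1 hz.1, ll_trans _ _ _ hz.2 hqW.2⟩⟩
  | univ =>
    intro x _
    obtain ⟨⟨q, hq⟩, ⟨p, hp⟩⟩ := no_isolated x
    exact ⟨p, q, hp, hq, Set.subset_univ _⟩
  | inter s t _ _ ihs iht =>
    intro x hx
    obtain ⟨p1, q1, hp1, hq1, hs1⟩ := ihs x hx.1
    obtain ⟨p2, q2, hp2, hq2, hs2⟩ := iht x hx.2
    have hWopen : IsOpen ({z | ll p1 z ∧ ll z q1} ∩ {z | ll p2 z ∧ ll z q2}) :=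
      (diamond_open tau_lsc ll_iff p1 q1).inter (diamond_open tau_lsc ll_iff p2 q2)
    have hxW : x ∈ {z | ll p1 z ∧ ll z q1} ∩ {z | ll p2 z ∧ ll z q2} :=
      ⟨⟨hp1, hq1⟩, ⟨hp2, hq2⟩⟩
    obtain ⟨p, hpx, hpW⟩ := exists_past cpc_timelike hp1 hWopen hxW
    obtain ⟨q, hxq, hqW⟩ := exists_future cpc_timelike hq1 hWopen hxW
    refine ⟨p, q, hpx, hxq, fun z hz => ⟨hs1 ?_, hs2 ?_⟩⟩
    · exact ⟨ll_trans _ _ _ hpW.1.1 hz.1, ll_trans _ _ _ hz.2 hqW.1.2⟩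
    · exact ⟨ll_trans _ _ _ hpW.2.1 hz.1, ll_trans _ _ _ hz.2 hqW.2.2⟩
  | sUnion K _ ih =>
    intro x hx
    obtain ⟨O, hOK, hxO⟩ := hx
    obtain ⟨p, q, hp, hq, hsub⟩ := ih O hOK x hxO
    exact ⟨p, q, hp, hq, hsub.trans (Set.subset_sUnion_of_mem hOK)⟩

end AuxSC

/-- In a causally path-connected Lorentzian pre-length space with no `≪`-isolated points,
strong causality is equivalent to the non-existence of almost closed causal curves:
for every `x` and neighbourhood `U` of `x` there is a neighbourhood `V ⊆ U` of `x` such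
that every causal curve with endpoints in `V` stays in `U`. -/
theorem strong_causality_iff_no_almost_closed_causal_curves {X : Type*} [MetricSpace X]
    (ll le : X → X → Prop) (tau : X → X → ENNReal)
    (le_refl : ∀ x, le x x) (le_trans : ∀ x y z, le x y → le y z → le x z)
    (ll_trans : ∀ x y z, ll x y → ll y z → ll x z)
    (ll_le : ∀ x y, ll x y → le x y)
    (tau_lsc : LowerSemicontinuous fun p : X × X => tau p.1 p.2)
    (rev_tri : ∀ x y z, le x y → le y z → tau x y + tau y z ≤ tau x z)
    (ll_iff : ∀ x y, ll x y ↔ 0 < tau x y)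
    (cpc_timelike : ∀ x y, ll x y →
      ∃ γ a b, IsCausalCurve ll γ a b ∧ γ a = x ∧ γ b = y)
    (cpc_causal : ∀ x y, le x y →
      ∃ γ a b, IsCausalCurve le γ a b ∧ γ a = x ∧ γ b = y)
    (no_isolated : ∀ x : X, (∃ q, ll x q) ∧ (∃ q, ll q x)) :
    ((inferInstance : TopologicalSpace X) =
        TopologicalSpace.generateFrom {S | ∃ x y, S = {z | ll x z ∧ ll z y}}) ↔
      (∀ x : X, ∀ U ∈ nhds x, ∃ V ∈ nhds x, V ⊆ U ∧
        ∀ γ a b, IsCausalCurve le γ a b → γ a ∈ V → γ b ∈ V →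
          ∀ t ∈ Set.Icc a b, γ t ∈ U) := by
  constructor
  · -- strong causality → no almost closed causal curves
    intro h x U hU
    obtain ⟨O, hOU, hOopen, hxO⟩ := mem_nhds_iff.1 hU
    have hgen : TopologicalSpace.GenerateOpen {S | ∃ x y, S = {z | ll x z ∧ ll z y}} O := by
      have h2 : @IsOpen X (TopologicalSpace.generateFrom {S | ∃ x y, S = {z | ll x z ∧ ll z y}}) O := by
        rw [← h]; exact hOopen
      exact h2
    obtain ⟨p, q, hpx, hxq, hsub⟩ :=
      diamond_basis tau_lsc ll_iff ll_trans cpc_timelike no_isolated hgen x hxO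
    refine ⟨{z | ll p z ∧ ll z q},
      (diamond_open tau_lsc ll_iff p q).mem_nhds ⟨hpx, hxq⟩,
      hsub.trans hOU, ?_⟩
    intro γ a b hγ hga hgb t ht
    have hle1 : le (γ a) (γ t) := by
      rcases eq_or_lt_of_le ht.1 with rfl | hat
      · exact le_refl _
      · exact hγ.2.2 a ⟨le_rfl, hγ.1⟩ t ht hat
    have hle2 : le (γ t) (γ b) := by
      rcases eq_or_lt_of_le ht.2 with rfl | htb
      · exact le_refl _
      · exact hγ.2.2 t ht b ⟨hγ.1, le_rfl⟩ htb
    have h1 : ll p (γ t) := aux_pushup rev_tri ll_le ll_iff hga.1 hle1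
    have h2 : ll (γ t) q := aux_pushdown rev_tri ll_le ll_iff hle2 hgb.2
    exact hOU (hsub ⟨h1, h2⟩)
  · -- no almost closed causal curves → strong causality
    intro H
    apply le_antisymm
    · exact le_generateFrom (by
        rintro s ⟨p, q, rfl⟩
        exact diamond_open tau_lsc ll_iff p q)
    · rw [TopologicalSpace.le_def]
      intro U hUopen
      -- every point of U lies in a diamond inside U
      have key : ∀ x ∈ U, ∃ p q, (x ∈ {z | ll p z ∧ ll z q}) ∧ {z | ll p z ∧ ll z q} ⊆ U := by
        intro x hxU
        obtain ⟨V, hVnhds, hVU, hcur⟩ := H x U (hUopen.mem_nhds hxU)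
        obtain ⟨δ, hδ, hball⟩ := Metric.mem_nhds_iff.1 hVnhds
        obtain ⟨⟨q0, hq0⟩, ⟨p0, hp0⟩⟩ := no_isolated x
        obtain ⟨p, hpx, hpB⟩ :=
          exists_past cpc_timelike hp0 Metric.isOpen_ball (Metric.mem_ball_self hδ)
        obtain ⟨q, hxq, hqB⟩ :=
          exists_future cpc_timelike hq0 Metric.isOpen_ball (Metric.mem_ball_self hδ)
        refine ⟨p, q, ⟨hpx, hxq⟩, ?_⟩
        rintro z ⟨hpz, hzq⟩
        obtain ⟨γ1, a1, b1, hc1, hg1a, hg1b⟩ := cpc_timelike p z hpz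
        obtain ⟨γ2, a2, b2, hc2, hg2a, hg2b⟩ := cpc_timelike z q hzq
        obtain ⟨γ, B, hγ, hγa, hγB, hmem, hγb1⟩ :=
          causal_concat le_trans (aux_causal_of_timelike ll_le hc1)
            (aux_causal_of_timelike ll_le hc2) (by rw [hg1b, hg2a])
        have := hcur γ a1 B hγ (by rw [hγa, hg1a]; exact hball hpB)
          (by rw [hγB, hg2b]; exact hball hqB) b1 hmem
        rwa [hγb1, hg1b] at this
      -- hence U is a union of basic sets
      have hU : U = ⋃₀ {D | D ∈ {S | ∃ x y, S = {z | ll x z ∧ ll z y}} ∧ D ⊆ U} := by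
        apply Set.Subset.antisymm
        · intro x hx
          obtain ⟨p, q, hxD, hDU⟩ := key x hx
          exact ⟨{z | ll p z ∧ ll z q}, ⟨⟨p, q, rfl⟩, hDU⟩, hxD⟩
        · rintro x ⟨D, ⟨_, hDU⟩, hxD⟩
          exact hDU hxD
      rw [hU]
      exact TopologicalSpace.GenerateOpen.sUnion _ (fun D hD => TopologicalSpace.GenerateOpen.basic D hD.1)
end

section
/- Let X be a second countable, locally compact Hausdorff topological space and ≤ a closed, reflexive, transitive relation on X. Then there exists a continuous function T : X → ℝ such that x ≤ y implies T(x) ≤ T(y), with T(x) = T(y) if and only if also y ≤ x (Levin's theorem). -/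
/-!
On a compact Hausdorff space a closed preorder is normally preordered. If a closed set `c` lies in
an open lower set `u`, then so does the closed set `lowerClosure c`; normality gives an open `w`
with `lowerClosure c ⊆ w` and `closure w ⊆ u`, and the open lower set `(upperClosure wᶜ)ᶜ` still
contains `c` and has its closure in `u`. Running Mathlib's Urysohn construction with open lower
sets therefore produces monotone Urysohn functions, and averaging `N` of them approximates, within
`1 / N`, any function that is continuous and monotone on a closed set.

On a locally compact σ-compact space, successive approximations on an exhaustion by compact sets,
with summable errors, converge locally uniformly to a continuous monotone `f` with `f x < f y`
whenever `¬ y ≤ x`. By second countability countably many such `g n` separate all strict pairs,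
and `∑ 2⁻ⁿ g n` is the required utility.
-/

open Set Filter Topology

namespace Urysohns.CU

variable {K : Type*} [TopologicalSpace K] [Preorder K]

theorem monotone_approx (n : ℕ) (c : CU fun (_ u : Set K) => IsLowerSet u) :
    Monotone (c.approx n) := by
  induction n generalizing c with
  | zero =>
    intro x y hxy
    by_cases hy : y ∈ c.U
    · have hx : x ∈ c.U := c.P_C_U hxy hy
      simp [approx, hx, hy]
    · simp only [approx, indicator_of_mem (show y ∈ c.Uᶜ from hy), Pi.one_apply]
      exact indicator_le_self' (fun _ _ => zero_le_one) x
  | succ n ih => exact fun x y hxy => midpoint_le_midpoint (ih _ hxy) (ih _ hxy)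

theorem monotone_lim (c : CU fun (_ u : Set K) => IsLowerSet u) : Monotone c.lim :=
  fun _ _ hxy => ciSup_mono (c.bddAbove_range_approx _) fun n => c.monotone_approx n hxy

end Urysohns.CU

theorem abs_sum_range_sub_le_one {a : ℕ → ℝ} (ha : ∀ k, a k ∈ Icc (0 : ℝ) 1) {t : ℝ}
    (h₁ : ∀ k : ℕ, (k : ℝ) + 1 ≤ t → a k = 1) (h₀ : ∀ k : ℕ, t ≤ k → a k = 0) :
    ∀ n : ℕ, t ∈ Icc (0 : ℝ) n → |∑ k ∈ Finset.range n, a k - t| ≤ 1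
  | 0, ht => by
    rw [Nat.cast_zero, Icc_self, mem_singleton_iff] at ht
    simp [ht]
  | n + 1, ht => by
    rw [Finset.sum_range_succ]
    by_cases htn : t ≤ n
    · rw [h₀ n htn, add_zero]
      exact abs_sum_range_sub_le_one ha h₁ h₀ n ⟨ht.1, htn⟩
    · have hsum : ∑ k ∈ Finset.range n, a k = n := by
        rw [Finset.sum_congr rfl fun k hk => h₁ k ?_]
        · simp
        · have : (k : ℝ) + 1 ≤ n := by exact_mod_cast Finset.mem_range.1 hk
          linarith
      have htn' : t ≤ n + 1 := by exact_mod_cast ht.2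
      rw [hsum, abs_le]
      constructor <;> linarith [not_le.1 htn, (ha n).1, (ha n).2]

section CompactSpace

variable {K : Type*} [TopologicalSpace K] [Preorder K] [OrderClosedTopology K] [CompactSpace K]

theorem IsClosed.isClosed_upperClosure {s : Set K} (hs : IsClosed s) :
    IsClosed (upperClosure s : Set K) := by
  have : (upperClosure s : Set K) = Prod.snd '' ({p : K × K | p.1 ≤ p.2} ∩ Prod.fst ⁻¹' s) := by
    ext y
    simp [mem_upperClosure, and_comm]
  exact this ▸ isClosedMap_snd_of_compactSpace _
    (isClosed_le_prod.inter (hs.preimage continuous_fst))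

theorem IsClosed.isClosed_lowerClosure {s : Set K} (hs : IsClosed s) :
    IsClosed (lowerClosure s : Set K) := by
  have : (lowerClosure s : Set K) = Prod.fst '' ({p : K × K | p.1 ≤ p.2} ∩ Prod.snd ⁻¹' s) := by
    ext y
    simp [mem_lowerClosure, and_comm]
  exact this ▸ isClosedMap_fst_of_compactSpace _
    (isClosed_le_prod.inter (hs.preimage continuous_snd))

theorem exists_isOpen_isLowerSet_subset {s u : Set K} (hs : IsLowerSet s) (hu : IsOpen u)
    (hsu : s ⊆ u) : ∃ v, IsOpen v ∧ IsLowerSet v ∧ s ⊆ v ∧ v ⊆ u := by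
  refine ⟨(upperClosure uᶜ : Set K)ᶜ, hu.isClosed_compl.isClosed_upperClosure.isOpen_compl,
    (upperClosure uᶜ).upper.compl, ?_,
    fun x hx => not_not.1 fun hxu => hx (subset_upperClosure hxu)⟩
  rintro x hx ⟨a, hau, hax⟩
  exact hau (hsu (hs hax hx))

variable [T2Space K]

theorem exists_isOpen_isLowerSet_closure_subset {c u : Set K} (hc : IsClosed c) (hu : IsOpen u)
    (hu' : IsLowerSet u) (hcu : c ⊆ u) : ∃ v, IsOpen v ∧ IsLowerSet v ∧ c ⊆ v ∧ closure v ⊆ u := by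
  obtain ⟨w, hw, hcw, hwu⟩ :=
    normal_exists_closure_subset hc.isClosed_lowerClosure hu (lowerClosure_min hcu hu')
  obtain ⟨v, hv, hv', hcv, hvw⟩ := exists_isOpen_isLowerSet_subset (lowerClosure c).lower hw hcw
  exact ⟨v, hv, hv', subset_lowerClosure.trans hcv, (closure_mono hvw).trans hwu⟩

theorem exists_continuous_monotone_zero_one {s t : Set K} (hs : IsClosed s) (ht : IsClosed t)
    (ht' : IsUpperSet t) (hst : Disjoint s t) :
    ∃ f : C(K, ℝ), Monotone f ∧ EqOn f 0 s ∧ EqOn f 1 t ∧ ∀ x, f x ∈ Icc (0 : ℝ) 1 := by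
  let c : Urysohns.CU fun (_ u : Set K) => IsLowerSet u :=
    { C := s
      U := tᶜ
      P_C_U := ht'.compl
      closed_C := hs
      open_U := ht.isOpen_compl
      subset := disjoint_left.1 hst
      hP := by
        rintro c u hc hu' hu hcu
        obtain ⟨v, hv, hv', hcv, hvu⟩ := exists_isOpen_isLowerSet_closure_subset hc hu hu' hcu
        exact ⟨v, hv, hcv, hvu, hv', hu'⟩ }
  exact ⟨⟨c.lim, c.continuous_lim⟩, c.monotone_lim, c.lim_of_mem_C,
    fun x hx => c.lim_of_notMem_U x (· hx), c.lim_mem_Icc⟩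

theorem exists_monotone_abs_sub_le {s : Set K} (hs : IsClosed s) {f : K → ℝ}
    (hf : ContinuousOn f s) (hfm : MonotoneOn f s) (hfI : MapsTo f s (Icc 0 1)) {ε : ℝ}
    (hε : 0 < ε) :
    ∃ g : C(K, ℝ), Monotone g ∧ (∀ x, g x ∈ Icc (0 : ℝ) 1) ∧ ∀ x ∈ s, |g x - f x| ≤ ε := by
  obtain ⟨N, hN⟩ := exists_nat_gt ε⁻¹
  have hN₀ : (0 : ℝ) < N := (inv_pos.2 hε).trans hN
  have hφ (k : ℕ) : ∃ φ : C(K, ℝ), Monotone φ ∧ EqOn φ 0 (s ∩ f ⁻¹' Iic (k / N)) ∧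
      EqOn φ 1 (upperClosure (s ∩ f ⁻¹' Ici ((k + 1) / N))) ∧ ∀ x, φ x ∈ Icc (0 : ℝ) 1 := by
    refine exists_continuous_monotone_zero_one (hf.preimage_isClosed_of_isClosed hs isClosed_Iic)
      (hf.preimage_isClosed_of_isClosed hs isClosed_Ici).isClosed_upperClosure
      (upperClosure _).upper (disjoint_left.2 ?_)
    rintro x ⟨hxs, hxk⟩ ⟨a, ⟨has, hak⟩, hax⟩
    have : (k : ℝ) / N < (k + 1) / N := by gcongr; linarith
    exact absurd ((hak.trans (hfm has hxs hax)).trans hxk) this.not_ge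
  choose φ hφm hφ₀ hφ₁ hφI using hφ
  refine ⟨⟨fun x => (∑ k ∈ Finset.range N, φ k x) / N, by fun_prop⟩, fun x y hxy => ?_,
    fun x => ?_, fun x hx => ?_⟩
  · exact div_le_div_of_nonneg_right (Finset.sum_le_sum fun k _ => hφm k hxy) hN₀.le
  · have hsum := Finset.sum_le_sum fun k (_ : k ∈ Finset.range N) => (hφI k x).2
    simp only [Finset.sum_const, Finset.card_range, nsmul_eq_mul, mul_one] at hsum
    exact ⟨div_nonneg (Finset.sum_nonneg fun k _ => (hφI k x).1) hN₀.le, (div_le_one hN₀).2 hsum⟩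
  · have key := abs_sum_range_sub_le_one (a := fun k => φ k x) (t := N * f x) (fun k => hφI k x)
      (fun k hk => hφ₁ k (subset_upperClosure ⟨hx, (div_le_iff₀' hN₀).2 hk⟩))
      (fun k hk => hφ₀ k ⟨hx, (le_div_iff₀' hN₀).2 hk⟩) N
      ⟨mul_nonneg hN₀.le (hfI hx).1, mul_le_of_le_one_right hN₀.le (hfI hx).2⟩
    have hεN : 1 ≤ N * ε := by
      rw [inv_lt_iff_one_lt_mul₀ hε] at hN
      exact hN.le
    change |(∑ k ∈ Finset.range N, φ k x) / N - f x| ≤ ε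
    rw [div_sub' hN₀.ne', abs_div, abs_of_pos hN₀, div_le_iff₀ hN₀]
    linarith

end CompactSpace

theorem continuous_tsum_of_norm_le_of_mem_nhds {X E : Type*} [TopologicalSpace X]
    [NormedAddCommGroup E] [CompleteSpace E] {L : ℕ → Set X} (hLm : Monotone L)
    (hL : ∀ x, ∃ n, L n ∈ 𝓝 x) {f : ℕ → X → E} (hf : ∀ k, Continuous (f k)) {δ : ℕ → ℝ}
    (hδ : Summable δ) (hfδ : ∀ k, ∀ x ∈ L k, ‖f k x‖ ≤ δ k) :
    (∀ x, Summable fun k => f k x) ∧ Continuous fun x => ∑' k, f k x := by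
  have hδm (m : ℕ) : Summable fun k => δ (k + m) := (summable_nat_add_iff m).2 hδ
  have hfδm (m : ℕ) : ∀ k, ∀ x ∈ L m, ‖f (k + m) x‖ ≤ δ (k + m) :=
    fun k x hx => hfδ _ x (hLm (Nat.le_add_left m k) hx)
  have hsum (x : X) : Summable fun k => f k x := by
    obtain ⟨m, hm⟩ := hL x
    exact (summable_nat_add_iff m).1
      ((hδm m).of_norm_bounded fun k => hfδm m k x (mem_of_mem_nhds hm))
  refine ⟨hsum, continuous_iff_continuousAt.2 fun x => ?_⟩
  obtain ⟨m, hm⟩ := hL x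
  -- on the neighbourhood `L m` of `x` the tail from `m` on is uniformly dominated by `δ`
  have hsplit : (fun y => ∑' k, f k y) = fun y => ∑ k ∈ Finset.range m, f k y + ∑' k, f (k + m) y :=
    funext fun y => ((hsum y).sum_add_tsum_nat_add m).symm
  rw [hsplit]
  exact (continuous_finsetSum _ fun k _ => hf k).continuousAt.add
    ((continuousOn_tsum (fun k => (hf (k + m)).continuousOn) (hδm m) (hfδm m)).continuousAt hm)

theorem exists_tendsto_of_abs_sub_le {X : Type*} [TopologicalSpace X] {L : ℕ → Set X}
    (hLm : Monotone L) (hL : ∀ x, ∃ n, L n ∈ 𝓝 x) {u : ℕ → X → ℝ} (hu : ∀ n, Continuous (u n))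
    {δ : ℕ → ℝ} (hδ : Summable δ) (hclose : ∀ n, ∀ x ∈ L n, |u (n + 1) x - u n x| ≤ δ n) :
    ∃ F : C(X, ℝ), (∀ x, Tendsto (fun n => u n x) atTop (𝓝 (F x))) ∧
      ∀ x ∈ L 0, |F x - u 0 x| ≤ ∑' n, δ n := by
  obtain ⟨hsum, hcont⟩ := continuous_tsum_of_norm_le_of_mem_nhds hLm hL
    (f := fun n x => u (n + 1) x - u n x) (fun n => (hu (n + 1)).sub (hu n)) hδ hclose
  refine ⟨⟨fun x => u 0 x + ∑' n, (u (n + 1) x - u n x), (hu 0).add hcont⟩, fun x => ?_,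
    fun x hx => ?_⟩
  · have := (tendsto_const_nhds (x := u 0 x)).add (hsum x).hasSum.tendsto_sum_nat
    simpa only [ContinuousMap.coe_mk, Finset.sum_range_sub (u · x), add_sub_cancel] using this
  · have := tsum_of_norm_bounded (f := fun n => u (n + 1) x - u n x) hδ.hasSum
      fun n => (Real.norm_eq_abs _).trans_le (hclose n x (hLm n.zero_le hx))
    simpa only [ContinuousMap.coe_mk, add_sub_cancel_left, Real.norm_eq_abs] using this

section LocallyCompact

variable {X : Type*} [TopologicalSpace X] [Preorder X] [OrderClosedTopology X] [T2Space X]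
  [NormalSpace X]

theorem exists_monotoneOn_abs_sub_le {s t : Set X} (hs : IsClosed s) (ht : IsCompact t)
    (hst : s ⊆ t) {u : X → ℝ} (hu : Continuous u) (hum : MonotoneOn u s)
    (huI : ∀ x, u x ∈ Icc (0 : ℝ) 1) {ε : ℝ} (hε : 0 < ε) :
    ∃ v : C(X, ℝ), MonotoneOn v t ∧ (∀ x, v x ∈ Icc (0 : ℝ) 1) ∧ ∀ x ∈ s, |v x - u x| ≤ ε := by
  have := isCompact_iff_compactSpace.1 ht
  obtain ⟨g, hgm, hgI, hg⟩ := exists_monotone_abs_sub_le (K := t) (s := Subtype.val ⁻¹' s)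
    (hs.preimage continuous_subtype_val) (hu.comp continuous_subtype_val).continuousOn
    (fun x hx y hy hxy => hum hx hy hxy) (fun x _ => huI x) hε
  obtain ⟨v, hvI, hvg⟩ :=
    g.exists_restrict_eq_forall_mem_of_closed hgI (nonempty_Icc.2 zero_le_one) ht.isClosed
  have hv (x : X) (hx : x ∈ t) : v x = g ⟨x, hx⟩ := DFunLike.congr_fun hvg ⟨x, hx⟩
  refine ⟨v, fun x hx y hy hxy => ?_, hvI, fun x hx => ?_⟩
  · rw [hv x hx, hv y hy]
    exact hgm hxy
  · rw [hv x (hst hx)]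
    exact hg ⟨x, hst hx⟩ hx

theorem exists_seq_monotoneOn_abs_sub_le {L : ℕ → Set X} (hL : ∀ n, IsCompact (L n))
    (hLm : Monotone L) {u₀ : X → ℝ} (hu₀ : Continuous u₀) (hu₀m : MonotoneOn u₀ (L 0))
    (hu₀I : ∀ x, u₀ x ∈ Icc (0 : ℝ) 1) {δ : ℕ → ℝ} (hδ : ∀ n, 0 < δ n) :
    ∃ u : ℕ → X → ℝ, u 0 = u₀ ∧
      (∀ n, Continuous (u n) ∧ MonotoneOn (u n) (L n) ∧ ∀ x, u n x ∈ Icc (0 : ℝ) 1) ∧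
      ∀ n, ∀ x ∈ L n, |u (n + 1) x - u n x| ≤ δ n := by
  let Good (n : ℕ) (v : X → ℝ) : Prop :=
    Continuous v ∧ MonotoneOn v (L n) ∧ ∀ x, v x ∈ Icc (0 : ℝ) 1
  have step (n : ℕ) (v : X → ℝ) (hv : Good n v) :
      ∃ w, Good (n + 1) w ∧ ∀ x ∈ L n, |w x - v x| ≤ δ n := by
    obtain ⟨w, hwm, hwI, hw⟩ := exists_monotoneOn_abs_sub_le (hL n).isClosed (hL (n + 1))
      (hLm n.le_succ) hv.1 hv.2.1 hv.2.2 (hδ n)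
    exact ⟨w, ⟨w.continuous, hwm, hwI⟩, hw⟩
  choose next hnext hnext_close using step
  let seq (n : ℕ) : {v // Good n v} :=
    Nat.rec ⟨u₀, hu₀, hu₀m, hu₀I⟩ (fun n v => ⟨next n v.1 v.2, hnext n v.1 v.2⟩) n
  exact ⟨fun n => (seq n).1, rfl, fun n => (seq n).2, fun n => hnext_close n _ _⟩

variable [LocallyCompactSpace X] [SigmaCompactSpace X]

theorem exists_monotone_lt_of_not_le {x y : X} (hyx : ¬y ≤ x) :
    ∃ f : C(X, ℝ), Monotone f ∧ (∀ z, f z ∈ Icc (0 : ℝ) 1) ∧ f x < f y := by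
  set E := CompactExhaustion.choice X
  set L : ℕ → Set X := fun n => {x, y} ∪ E n
  have hLc (n : ℕ) : IsCompact (L n) :=
    ((finite_singleton y).insert x).isCompact.union (E.isCompact n)
  have hLm : Monotone L := fun m n hmn => union_subset_union_right _ (E.subset hmn)
  have hL (z : X) : ∃ n, L n ∈ 𝓝 z :=
    (E.exists_mem_nhds z).imp fun n hn => mem_of_superset hn subset_union_right
  have hmem (z : X) : ∃ n, z ∈ L n := (hL z).imp fun _ => mem_of_mem_nhds
  have hxy_closed : IsClosed ({x, y} : Set X) := ((finite_singleton y).insert x).isClosed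
  obtain ⟨u, hux, huy, huI⟩ := exists_continuous_zero_one_of_isClosed (s := {x}) (t := {y})
    isClosed_singleton isClosed_singleton (disjoint_singleton.2 (by rintro rfl; exact hyx le_rfl))
  have hum : MonotoneOn u {x, y} := by
    rintro a (rfl | rfl) b (rfl | rfl) hab
    · exact le_rfl
    · simp [hux rfl, huy rfl]
    · exact absurd hab hyx
    · exact le_rfl
  -- `F` below stays within `1 / 8` of `u₀`, and `u₀` within `1 / 4` of `0` at `x` and `1` at `y`
  obtain ⟨u₀, hu₀m, hu₀I, hu₀⟩ := exists_monotoneOn_abs_sub_le hxy_closed (hLc 0) subset_union_left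
    u.continuous hum huI (by norm_num : (0 : ℝ) < 1 / 4)
  obtain ⟨v, hv₀, hv, hclose⟩ := exists_seq_monotoneOn_abs_sub_le hLc hLm u₀.continuous hu₀m
    hu₀I (δ := fun n => 1 / 16 * (1 / 2) ^ n) fun n => by positivity
  obtain ⟨F, hF, hF₀⟩ := exists_tendsto_of_abs_sub_le hLm hL (fun n => (hv n).1)
    (summable_geometric_two.mul_left (1 / 16)) hclose
  rw [tsum_mul_left, tsum_geometric_two, hv₀] at hF₀
  refine ⟨F, fun a b hab => ?_, fun z => isClosed_Icc.mem_of_tendsto (hF z)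
    (Eventually.of_forall fun n => (hv n).2.2 z), ?_⟩
  · obtain ⟨m, ha⟩ := hmem a
    obtain ⟨n, hb⟩ := hmem b
    refine le_of_tendsto_of_tendsto (hF a) (hF b) (eventually_atTop.2 ⟨max m n, fun k hk => ?_⟩)
    exact (hv k).2.1 (hLm (le_of_max_le_left hk) ha) (hLm (le_of_max_le_right hk) hb) hab
  · have hx := hF₀ x (subset_union_left (mem_insert x _))
    have hy := hF₀ y (subset_union_left (mem_insert_of_mem x rfl))
    have hx₀ := hu₀ x (mem_insert x _)
    have hy₀ := hu₀ y (mem_insert_of_mem x rfl)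
    rw [hux rfl] at hx₀
    rw [huy rfl] at hy₀
    simp only [Pi.zero_apply, Pi.one_apply, abs_le] at hx hy hx₀ hy₀
    linarith [hx.2, hy.1, hx₀.2, hy₀.1]

end LocallyCompact

theorem exists_seq_forall_lt_of_forall_exists_lt {X : Type*} [TopologicalSpace X]
    [SecondCountableTopology X] {P : C(X, ℝ) → Prop} (hP : ∃ f, P f) {S : Set (X × X)}
    (hS : ∀ p ∈ S, ∃ f, P f ∧ f p.1 < f p.2) :
    ∃ g : ℕ → C(X, ℝ), (∀ n, P (g n)) ∧ ∀ p ∈ S, ∃ n, g n p.1 < g n p.2 := by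
  obtain ⟨T, hTP, hTc, hTU⟩ := TopologicalSpace.isOpen_biUnion_countable {f | P f}
    (fun f : C(X, ℝ) => {p : X × X | f p.1 < f p.2})
    fun f _ => isOpen_lt (by fun_prop) (by fun_prop)
  obtain ⟨f₀, hf₀⟩ := hP
  obtain ⟨g, hg⟩ := (hTc.insert f₀).exists_eq_range (insert_nonempty f₀ T)
  refine ⟨g, fun n => ?_, fun p hp => ?_⟩
  · obtain h | h : g n ∈ insert f₀ T := hg ▸ mem_range_self n
    exacts [h ▸ hf₀, hTP h]
  · obtain ⟨f, hf, hfp⟩ := hS p hp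
    obtain ⟨f', hf'T, hf'p⟩ := mem_iUnion₂.1 (hTU ▸ mem_biUnion (x := f) hf hfp)
    obtain ⟨n, rfl⟩ : f' ∈ range g := hg ▸ mem_insert_of_mem f₀ hf'T
    exact ⟨n, hf'p⟩

theorem exists_monotone_lt_of_seq {X : Type*} [TopologicalSpace X] [Preorder X]
    (g : ℕ → C(X, ℝ)) (hgm : ∀ n, Monotone (g n)) (hgI : ∀ n x, g n x ∈ Icc (0 : ℝ) 1) :
    ∃ T : C(X, ℝ), Monotone T ∧ ∀ ⦃x y⦄ n, x ≤ y → g n x < g n y → T x < T y := by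
  have hbound (n : ℕ) (x : X) : ‖(1 / 2 : ℝ) ^ n * g n x‖ ≤ (1 / 2) ^ n := by
    rw [norm_mul, norm_pow, Real.norm_of_nonneg (hgI n x).1, Real.norm_of_nonneg one_half_pos.le]
    exact mul_le_of_le_one_right (by positivity) (hgI n x).2
  have hsum (x : X) : Summable fun n => (1 / 2 : ℝ) ^ n * g n x :=
    summable_geometric_two.of_norm_bounded (hbound · x)
  have hle {x y : X} (hxy : x ≤ y) (n : ℕ) : (1 / 2 : ℝ) ^ n * g n x ≤ (1 / 2) ^ n * g n y :=
    mul_le_mul_of_nonneg_left (hgm n hxy) (by positivity)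
  refine ⟨⟨fun x => ∑' n, (1 / 2 : ℝ) ^ n * g n x,
    continuous_tsum (fun n => by fun_prop) summable_geometric_two hbound⟩,
    fun x y hxy => (hsum x).tsum_le_tsum (hle hxy) (hsum y), fun x y n hxy hn => ?_⟩
  exact (hsum x).tsum_lt_tsum (hle hxy) (mul_lt_mul_of_pos_left hn (by positivity)) (hsum y)

/-- **Levin's theorem**: on a second countable, locally compact Hausdorff space with a
closed reflexive transitive relation `≤`, there is a continuous function `T : X → ℝ` with
`x ≤ y → T x ≤ T y`, and (given `x ≤ y`) `T x = T y` iff also `y ≤ x`. -/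
theorem levin_theorem {X : Type*} [TopologicalSpace X] [SecondCountableTopology X]
    [LocallyCompactSpace X] [T2Space X] (le : X → X → Prop)
    (le_refl : ∀ x, le x x) (le_trans : ∀ x y z, le x y → le y z → le x z)
    (le_closed : IsClosed {p : X × X | le p.1 p.2}) :
    ∃ T : X → ℝ, Continuous T ∧
      ∀ x y, le x y → (T x ≤ T y ∧ (T x = T y ↔ le y x)) := by
  let _ : Preorder X := { le, le_refl, le_trans }
  have : OrderClosedTopology X := ⟨le_closed⟩
  obtain ⟨g, hg, hgS⟩ := exists_seq_forall_lt_of_forall_exists_lt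
    (P := fun f : C(X, ℝ) => Monotone f ∧ ∀ x, f x ∈ Icc (0 : ℝ) 1)
    ⟨0, monotone_const, fun _ => ⟨le_rfl, zero_le_one⟩⟩ (S := {p | ¬p.2 ≤ p.1})
    fun p hp => (exists_monotone_lt_of_not_le hp).imp fun f hf => ⟨⟨hf.1, hf.2.1⟩, hf.2.2⟩
  obtain ⟨T, hTm, hTlt⟩ := exists_monotone_lt_of_seq g (fun n => (hg n).1) fun n => (hg n).2
  refine ⟨T, T.continuous, fun x y hxy => ⟨hTm hxy, fun hT => ?_, fun hyx => ?_⟩⟩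
  · by_contra hyx
    obtain ⟨n, hn⟩ := hgS (x, y) hyx
    exact (hTlt n hxy hn).ne hT
  · exact (hTm hxy).antisymm (hTm hyx)
end

section
/- Let X be a Lorentzian pre-length space. If X is strongly causal and all causal diamonds J(x,y) are compact, then X is locally compact. -/
open Set

/-- If a Lorentzian pre-length space is strongly causal and all causal diamonds
`J(x,y)` are compact, then it is locally compact. -/
theorem locallyCompact_of_stronglyCausal_compactDiamonds {X : Type*} [MetricSpace X]
    (ll le : X → X → Prop)
    (le_refl : ∀ x, le x x) (le_trans : ∀ x y z, le x y → le y z → le x z)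
    (ll_trans : ∀ x y z, ll x y → ll y z → ll x z)
    (ll_le : ∀ x y, ll x y → le x y)
    (strongly_causal :
      (inferInstance : TopologicalSpace X) =
        TopologicalSpace.generateFrom {S | ∃ x y, S = {z | ll x z ∧ ll z y}})
    (J_compact : ∀ x y : X, IsCompact {z | le x z ∧ le z y}) :
    LocallyCompactSpace X := by
  have hwlc : WeaklyLocallyCompactSpace X := by
    constructor
    intro p
    by_cases h : ∃ x y : X, ll x p ∧ ll p y
    · obtain ⟨x, y, hx, hy⟩ := h
      refine ⟨{z | le x z ∧ le z y}, J_compact x y, ?_⟩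
      have hIopen : IsOpen {z | ll x z ∧ ll z y} := by
        have hg : @IsOpen X (TopologicalSpace.generateFrom
            {S | ∃ x y, S = {z | ll x z ∧ ll z y}}) {z | ll x z ∧ ll z y} :=
          TopologicalSpace.GenerateOpen.basic _ ⟨x, y, rfl⟩
        rwa [← strongly_causal] at hg
      exact mem_nhds_iff.mpr ⟨{z | ll x z ∧ ll z y},
        fun z hz => ⟨ll_le _ _ hz.1, ll_le _ _ hz.2⟩, hIopen, ⟨hx, hy⟩⟩
    · push_neg at h
      -- No timelike diamond contains p; then X = {p}.
      have huniv : (univ : Set X) = {p} := by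
        ext q
        simp only [mem_univ, mem_singleton_iff, true_iff]
        by_contra hq
        have hVopen : IsOpen (Metric.ball p (dist q p)) := Metric.isOpen_ball
        have hpV : p ∈ Metric.ball p (dist q p) := by
          simp [Metric.mem_ball, dist_pos.mpr hq]
        have hqV : q ∉ Metric.ball p (dist q p) := by
          simp [Metric.mem_ball]
        have hbasis := TopologicalSpace.isTopologicalBasis_of_subbasis strongly_causal
        obtain ⟨t, ⟨f, ⟨hf_fin, hf_sub⟩, rfl⟩, hpt, hts⟩ :=
          hbasis.exists_subset_of_mem_open hpV hVopen
        rcases f.eq_empty_or_nonempty with rfl | ⟨s, hs⟩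
        · exact hqV (hts (by simp))
        · have hps : p ∈ s := mem_sInter.mp hpt s hs
          obtain ⟨x, y, rfl⟩ := hf_sub hs
          exact h x y hps.1 hps.2
      refine ⟨univ, ?_, Filter.univ_mem⟩
      rw [huniv]
      exact isCompact_singleton
  infer_instance
end

section
/- In the Lorentzian amalgamation X = X₁ ⊔_A X₂, if [x] = {x¹, x²} ∈ A, then I_X^±([x]) = π(I₁^±(x¹) ⊔ I₂^±(x²)), and the analogous identity holds for J_X^±. -/
open Set Metric

variable {α : Type*}

section GlueAux

variable {X₁ X₂ : Type*} {A₁ : Set X₁} {f : X₁ → X₂}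

lemma glueEqv_symm {p q : X₁ ⊕ X₂} (h : glueEqv A₁ f p q) : glueEqv A₁ f q p :=
  Relation.EqvGen.symm _ _ h

/-- Characterization of the glue equivalence under injectivity on `A₁`. -/
lemma glueEqv_cases (hinj : Set.InjOn f A₁) {p q : X₁ ⊕ X₂} (h : glueEqv A₁ f p q) :
    p = q ∨ (∃ a ∈ A₁, p = Sum.inl a ∧ q = Sum.inr (f a)) ∨
      (∃ a ∈ A₁, q = Sum.inl a ∧ p = Sum.inr (f a)) := by
  induction h with
  | rel p q h =>
    obtain ⟨a, ha, rfl, rfl⟩ := h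
    exact Or.inr (Or.inl ⟨a, ha, rfl, rfl⟩)
  | refl p => exact Or.inl rfl
  | symm p q _ ih =>
    rcases ih with h | ⟨a, ha, h1, h2⟩ | ⟨a, ha, h1, h2⟩
    · exact Or.inl h.symm
    · exact Or.inr (Or.inr ⟨a, ha, h1, h2⟩)
    · exact Or.inr (Or.inl ⟨a, ha, h1, h2⟩)
  | trans p r q _ _ ih₁ ih₂ =>
    rcases ih₁ with h | ⟨a, ha, hpa, hra⟩ | ⟨a, ha, hra, hpa⟩
    · subst h; exact ih₂
    · subst hpa; subst hra
      rcases ih₂ with h | ⟨b, hb, hrb, hqb⟩ | ⟨b, hb, hqb, hrb⟩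
      · subst h; exact Or.inr (Or.inl ⟨a, ha, rfl, rfl⟩)
      · exact absurd hrb (by simp)
      · obtain rfl : a = b := hinj ha hb (by injection hrb)
        exact Or.inl hqb.symm
    · subst hpa; subst hra
      rcases ih₂ with h | ⟨b, hb, hrb, hqb⟩ | ⟨b, hb, hqb, hrb⟩
      · subst h; exact Or.inr (Or.inr ⟨a, ha, rfl, rfl⟩)
      · obtain rfl : a = b := by injection hrb
        exact Or.inl hqb.symm
      · exact absurd hrb (by simp)

/-- Everything equivalent to `inl x` with `x ∈ A₁` is `inl x` or `inr (f x)`. -/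
lemma glueEqv_inl_cases (hinj : Set.InjOn f A₁) {x : X₁} {p : X₁ ⊕ X₂}
    (h : glueEqv A₁ f (Sum.inl x) p) : p = Sum.inl x ∨ p = Sum.inr (f x) := by
  rcases glueEqv_cases hinj h with rfl | ⟨a, ha, h1, h2⟩ | ⟨a, ha, h1, h2⟩
  · exact Or.inl rfl
  · obtain rfl : x = a := by injection h1
    exact Or.inr h2
  · exact absurd h2 (by simp)

/-- The target set for the future representation. -/
lemma glueS_eqv (hinj : Set.InjOn f A₁)
    (r₁ : X₁ → X₁ → Prop) (r₂ : X₂ → X₂ → Prop)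
    (hpres : ∀ a ∈ A₁, ∀ b ∈ A₁, (r₁ a b ↔ r₂ (f a) (f b)))
    {x : X₁} (hx : x ∈ A₁) {p q : X₁ ⊕ X₂}
    (hp : p ∈ Sum.inl '' {y | r₁ x y} ∪ Sum.inr '' {y | r₂ (f x) y})
    (h : glueEqv A₁ f p q) :
    q ∈ Sum.inl '' {y | r₁ x y} ∪ Sum.inr '' {y | r₂ (f x) y} := by
  rcases glueEqv_cases hinj h with heq | ⟨a, ha, hp', hq'⟩ | ⟨a, ha, hq', hp'⟩
  · exact heq ▸ hp
  · subst hp'; subst hq'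
    rcases hp with ⟨y, hy, hy'⟩ | ⟨y, hy, hy'⟩
    · have hya : y = a := by injection hy'
      rw [hya] at hy
      exact Or.inr ⟨f a, (hpres x hx a ha).1 hy, rfl⟩
    · exact absurd hy' (by simp)
  · subst hp'; subst hq'
    rcases hp with ⟨y, hy, hy'⟩ | ⟨y, hy, hy'⟩
    · exact absurd hy' (by simp)
    · have hya : y = f a := by injection hy'
      rw [hya] at hy
      exact Or.inl ⟨a, (hpres x hx a ha).2 hy, rfl⟩

lemma glueS_R
    (r₁ : X₁ → X₁ → Prop) (r₂ : X₂ → X₂ → Prop)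
    (htr₁ : ∀ x y z, r₁ x y → r₁ y z → r₁ x z)
    (htr₂ : ∀ x y z, r₂ x y → r₂ y z → r₂ x z)
    {x : X₁} {p q : X₁ ⊕ X₂}
    (hp : p ∈ Sum.inl '' {y | r₁ x y} ∪ Sum.inr '' {y | r₂ (f x) y})
    (h : sumRel r₁ r₂ p q) :
    q ∈ Sum.inl '' {y | r₁ x y} ∪ Sum.inr '' {y | r₂ (f x) y} := by
  rcases hp with ⟨y, hy, rfl⟩ | ⟨y, hy, rfl⟩
  · cases q with
    | inl z => exact Or.inl ⟨z, htr₁ _ _ _ hy h, rfl⟩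
    | inr z => exact absurd h (by simp [sumRel])
  · cases q with
    | inl z => exact absurd h (by simp [sumRel])
    | inr z => exact Or.inr ⟨z, htr₂ _ _ _ hy h, rfl⟩

/-- General future representation lemma. -/
lemma glue_future_eq (hinj : Set.InjOn f A₁)
    (r₁ : X₁ → X₁ → Prop) (r₂ : X₂ → X₂ → Prop)
    (htr₁ : ∀ x y z, r₁ x y → r₁ y z → r₁ x z)
    (htr₂ : ∀ x y z, r₂ x y → r₂ y z → r₂ x z)
    (hpres : ∀ a ∈ A₁, ∀ b ∈ A₁, (r₁ a b ↔ r₂ (f a) (f b)))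
    {x : X₁} (hx : x ∈ A₁) :
    {q | qRel A₁ f (sumRel r₁ r₂) (Quotient.mk (glueSetoid A₁ f) (Sum.inl x)) q} =
      Quotient.mk (glueSetoid A₁ f) ''
        (Sum.inl '' {y | r₁ x y} ∪ Sum.inr '' {y | r₂ (f x) y}) := by
  set S : Set (X₁ ⊕ X₂) := Sum.inl '' {y | r₁ x y} ∪ Sum.inr '' {y | r₂ (f x) y} with hS
  ext q
  constructor
  · rintro ⟨a, b, ha, rfl, hchain⟩
    have haeqv : glueEqv A₁ f a (Sum.inl x) := Quotient.exact ha
    refine ⟨b, ?_, rfl⟩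
    clear ha
    induction hchain with
    | single h =>
      obtain ⟨p', q', h1, h2, h3⟩ := h
      have hp' : p' = Sum.inl x ∨ p' = Sum.inr (f x) :=
        glueEqv_inl_cases hinj ((glueEqv_symm haeqv).trans _ _ _ h1)
      have hq' : q' ∈ S := by
        rcases hp' with rfl | rfl
        · cases q' with
          | inl z => exact Or.inl ⟨z, h2, rfl⟩
          | inr z => exact absurd h2 (by simp [sumRel])
        · cases q' with
          | inl z => exact absurd h2 (by simp [sumRel])
          | inr z => exact Or.inr ⟨z, h2, rfl⟩
      exact glueS_eqv hinj r₁ r₂ hpres hx hq' h3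
    | tail _ h ih =>
      obtain ⟨p', q', h1, h2, h3⟩ := h
      have hp' : p' ∈ S := glueS_eqv hinj r₁ r₂ hpres hx ih h1
      have hq' : q' ∈ S := glueS_R r₁ r₂ htr₁ htr₂ hp' h2
      exact glueS_eqv hinj r₁ r₂ hpres hx hq' h3
  · rintro ⟨b, hb, rfl⟩
    rcases hb with ⟨y, hy, rfl⟩ | ⟨y, hy, rfl⟩
    · exact ⟨Sum.inl x, Sum.inl y, rfl, rfl,
        Relation.TransGen.single ⟨Sum.inl x, Sum.inl y,
          Relation.EqvGen.refl _, hy, Relation.EqvGen.refl _⟩⟩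
    · exact ⟨Sum.inl x, Sum.inr y, rfl, rfl,
        Relation.TransGen.single ⟨Sum.inr (f x), Sum.inr y,
          Relation.EqvGen.rel _ _ ⟨x, hx, rfl, rfl⟩, hy, Relation.EqvGen.refl _⟩⟩

lemma glueStep_swap (R : (X₁ ⊕ X₂) → (X₁ ⊕ X₂) → Prop) :
    glueStep (Function.swap R) (glueEqv A₁ f) =
      Function.swap (glueStep R (glueEqv A₁ f)) := by
  ext p q
  constructor
  · rintro ⟨p', q', h1, h2, h3⟩
    exact ⟨q', p', glueEqv_symm h3, h2, glueEqv_symm h1⟩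
  · rintro ⟨p', q', h1, h2, h3⟩
    exact ⟨q', p', glueEqv_symm h3, h2, glueEqv_symm h1⟩

lemma qRel_swap (R : (X₁ ⊕ X₂) → (X₁ ⊕ X₂) → Prop)
    (p q : Quotient (glueSetoid A₁ f)) :
    qRel A₁ f (Function.swap R) p q ↔ qRel A₁ f R q p := by
  constructor
  · rintro ⟨a, b, ha, hb, h⟩
    refine ⟨b, a, hb, ha, ?_⟩
    rw [quotRel, glueStep_swap] at h
    exact Relation.transGen_swap.1 h
  · rintro ⟨a, b, ha, hb, h⟩
    refine ⟨b, a, hb, ha, ?_⟩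
    rw [quotRel, glueStep_swap]
    exact Relation.transGen_swap.2 h

lemma sumRel_swap (r₁ : X₁ → X₁ → Prop) (r₂ : X₂ → X₂ → Prop) :
    sumRel (Function.swap r₁) (Function.swap r₂) = Function.swap (sumRel r₁ r₂) := by
  funext p q
  cases p <;> cases q <;> rfl

end GlueAux
/-- **Glued past and future representation at a glued point**: for `x ∈ A₁`
(so `[x] = {x, f x} ∈ A`), the timelike/causal future/past of `[x]` in the amalgamation
is exactly the projection of the disjoint union of the corresponding futures/pasts of
the two representatives. -/
theorem glued_point_future_past_representation {X₁ X₂ : Type*}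
    (A₁ : Set X₁) (A₂ : Set X₂) (f : X₁ → X₂) (hf : Set.BijOn f A₁ A₂)
    (ll₁ le₁ : X₁ → X₁ → Prop) (ll₂ le₂ : X₂ → X₂ → Prop)
    (le₁_refl : ∀ x, le₁ x x) (le₁_trans : ∀ x y z, le₁ x y → le₁ y z → le₁ x z)
    (le₂_refl : ∀ x, le₂ x x) (le₂_trans : ∀ x y z, le₂ x y → le₂ y z → le₂ x z)
    (ll₁_trans : ∀ x y z, ll₁ x y → ll₁ y z → ll₁ x z)
    (ll₂_trans : ∀ x y z, ll₂ x y → ll₂ y z → ll₂ x z)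
    (ll₁_le : ∀ x y, ll₁ x y → le₁ x y) (ll₂_le : ∀ x y, ll₂ x y → le₂ x y)
    (hpres_le : ∀ a ∈ A₁, ∀ b ∈ A₁, (le₁ a b ↔ le₂ (f a) (f b)))
    (hpres_ll : ∀ a ∈ A₁, ∀ b ∈ A₁, (ll₁ a b ↔ ll₂ (f a) (f b)))
    (x : X₁) (hx : x ∈ A₁) :
    ({q | qRel A₁ f (sumRel ll₁ ll₂) (Quotient.mk (glueSetoid A₁ f) (Sum.inl x)) q} =
      Quotient.mk (glueSetoid A₁ f) ''
        (Sum.inl '' {y | ll₁ x y} ∪ Sum.inr '' {y | ll₂ (f x) y})) ∧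
    ({q | qRel A₁ f (sumRel ll₁ ll₂) q (Quotient.mk (glueSetoid A₁ f) (Sum.inl x))} =
      Quotient.mk (glueSetoid A₁ f) ''
        (Sum.inl '' {y | ll₁ y x} ∪ Sum.inr '' {y | ll₂ y (f x)})) ∧
    ({q | qRel A₁ f (sumRel le₁ le₂) (Quotient.mk (glueSetoid A₁ f) (Sum.inl x)) q} =
      Quotient.mk (glueSetoid A₁ f) ''
        (Sum.inl '' {y | le₁ x y} ∪ Sum.inr '' {y | le₂ (f x) y})) ∧
    ({q | qRel A₁ f (sumRel le₁ le₂) q (Quotient.mk (glueSetoid A₁ f) (Sum.inl x))} =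
      Quotient.mk (glueSetoid A₁ f) ''
        (Sum.inl '' {y | le₁ y x} ∪ Sum.inr '' {y | le₂ y (f x)})) := by
  have hinj := hf.injOn
  refine ⟨glue_future_eq hinj ll₁ ll₂ ll₁_trans ll₂_trans hpres_ll hx, ?_,
    glue_future_eq hinj le₁ le₂ le₁_trans le₂_trans hpres_le hx, ?_⟩
  · have h := glue_future_eq hinj (Function.swap ll₁) (Function.swap ll₂)
      (fun a b c h1 h2 => ll₁_trans c b a h2 h1)
      (fun a b c h1 h2 => ll₂_trans c b a h2 h1)
      (fun a ha b hb => hpres_ll b hb a ha) hx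
    rw [sumRel_swap] at h
    simpa only [qRel_swap] using h
  · have h := glue_future_eq hinj (Function.swap le₁) (Function.swap le₂)
      (fun a b c h1 h2 => le₁_trans c b a h2 h1)
      (fun a b c h1 h2 => le₂_trans c b a h2 h1)
      (fun a ha b hb => hpres_le b hb a ha) hx
    rw [sumRel_swap] at h
    simpa only [qRel_swap] using h
end

section
/- In the Lorentzian amalgamation X = X₁ ⊔_A X₂, if [x] = {x¹} with x¹ ∈ X₁ \ A₁, then I_X^+([x]) = π(I₁^+(x¹) ⊔ ⋃_{a ∈ A₁, x¹ ≪ a} I₂^+(f(a))), and analogously for the past. -/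
open Set Metric

variable {α : Type*}

/-- Explicit description of the glue equivalence relation. -/
def glueE {X₁ X₂ : Type*} (A₁ : Set X₁) (f : X₁ → X₂) : X₁ ⊕ X₂ → X₁ ⊕ X₂ → Prop
  | Sum.inl u, Sum.inl v => u = v
  | Sum.inl u, Sum.inr w => u ∈ A₁ ∧ f u = w
  | Sum.inr w, Sum.inl u => u ∈ A₁ ∧ f u = w
  | Sum.inr w, Sum.inr w' => w = w'

/-- Explicit description of the quotient chronology relation on representatives. -/
def LLrel {X₁ X₂ : Type*} (A₁ : Set X₁) (f : X₁ → X₂)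
    (ll₁ : X₁ → X₁ → Prop) (ll₂ : X₂ → X₂ → Prop) : X₁ ⊕ X₂ → X₁ ⊕ X₂ → Prop
  | Sum.inl u, Sum.inl v => ll₁ u v
  | Sum.inl u, Sum.inr w => ∃ a ∈ A₁, (ll₁ u a ∧ f a = w) ∨ ((u = a ∨ ll₁ u a) ∧ ll₂ (f a) w)
  | Sum.inr w, Sum.inl v => ∃ a ∈ A₁, (f a = w ∧ ll₁ a v) ∨ (ll₂ w (f a) ∧ (a = v ∨ ll₁ a v))
  | Sum.inr w, Sum.inr w' => ll₂ w w'

section Aux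
variable {X₁ X₂ : Type*} {A₁ : Set X₁} {f : X₁ → X₂}
  {ll₁ : X₁ → X₁ → Prop} {ll₂ : X₂ → X₂ → Prop}

lemma glueE_of_eqv (hinj : Set.InjOn f A₁) {p q : X₁ ⊕ X₂} (h : glueEqv A₁ f p q) :
    glueE A₁ f p q := by
  induction h with
  | rel p q h => obtain ⟨a, ha, rfl, rfl⟩ := h; exact ⟨ha, rfl⟩
  | refl p => cases p <;> simp [glueE]
  | symm p q h ih => cases p <;> cases q <;> simp_all [glueE]
  | trans p q r h1 h2 ih1 ih2 =>
      cases p <;> cases q <;> cases r <;> simp_all [glueE]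
      · exact hinj ih1.1 ih2.1 (ih1.2.trans ih2.2.symm)

lemma egen {a : X₁} (ha : a ∈ A₁) : glueEqv A₁ f (Sum.inl a) (Sum.inr (f a)) :=
  .rel _ _ ⟨a, ha, rfl, rfl⟩

lemma LL_trans (hinj : Set.InjOn f A₁)
    (t₁ : ∀ x y z, ll₁ x y → ll₁ y z → ll₁ x z)
    (t₂ : ∀ x y z, ll₂ x y → ll₂ y z → ll₂ x z)
    (hp : ∀ a ∈ A₁, ∀ b ∈ A₁, (ll₁ a b ↔ ll₂ (f a) (f b)))
    {p q r : X₁ ⊕ X₂} (h1 : LLrel A₁ f ll₁ ll₂ p q) (h2 : LLrel A₁ f ll₁ ll₂ q r) :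
    LLrel A₁ f ll₁ ll₂ p r := by
  cases p with
  | inl u =>
    cases q with
    | inl v =>
      cases r with
      | inl v' => exact t₁ _ _ _ h1 h2
      | inr w =>
        obtain ⟨a, ha, hc⟩ := h2
        refine ⟨a, ha, ?_⟩
        rcases hc with ⟨hva, hfa⟩ | ⟨hva, hll⟩
        · exact Or.inl ⟨t₁ _ _ _ h1 hva, hfa⟩
        · refine Or.inr ⟨Or.inr ?_, hll⟩
          rcases hva with rfl | hva
          · exact h1
          · exact t₁ _ _ _ h1 hva
    | inr w =>
      obtain ⟨a, ha, hc⟩ := h1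
      have hub : ∀ b, ll₁ a b → (u = a ∨ ll₁ u a) → ll₁ u b := by
        rintro b hab (rfl | hua)
        · exact hab
        · exact t₁ _ _ _ hua hab
      cases r with
      | inl v =>
        obtain ⟨b, hb, hc'⟩ := h2
        show ll₁ u v
        rcases hc with ⟨hua, hfa⟩ | ⟨hua, hll⟩
        · rcases hc' with ⟨hfb, hbv⟩ | ⟨hll', hbv⟩
          · have : a = b := hinj ha hb (hfa.trans hfb.symm)
            subst this; exact t₁ _ _ _ hua hbv
          · have hab : ll₁ a b := (hp a ha b hb).mpr (hfa ▸ hll')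
            have huB : ll₁ u b := t₁ _ _ _ hua hab
            rcases hbv with rfl | hbv
            · exact huB
            · exact t₁ _ _ _ huB hbv
        · rcases hc' with ⟨hfb, hbv⟩ | ⟨hll', hbv⟩
          · have hab : ll₁ a b := (hp a ha b hb).mpr (hfb ▸ hll)
            have huB : ll₁ u b := hub b hab hua
            exact t₁ _ _ _ huB hbv
          · have hab : ll₁ a b := (hp a ha b hb).mpr (t₂ _ _ _ hll hll')
            have huB : ll₁ u b := hub b hab hua
            rcases hbv with rfl | hbv
            · exact huB
            · exact t₁ _ _ _ huB hbv
      | inr w' =>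
        refine ⟨a, ha, ?_⟩
        rcases hc with ⟨hua, hfa⟩ | ⟨hua, hll⟩
        · exact Or.inr ⟨Or.inr hua, hfa ▸ h2⟩
        · exact Or.inr ⟨hua, t₂ _ _ _ hll h2⟩
  | inr w =>
    cases q with
    | inl v =>
      obtain ⟨a, ha, hc⟩ := h1
      cases r with
      | inl v' =>
        refine ⟨a, ha, ?_⟩
        rcases hc with ⟨hfa, hav⟩ | ⟨hll, hav⟩
        · exact Or.inl ⟨hfa, t₁ _ _ _ hav h2⟩
        · refine Or.inr ⟨hll, Or.inr ?_⟩
          rcases hav with rfl | hav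
          · exact h2
          · exact t₁ _ _ _ hav h2
      | inr w' =>
        obtain ⟨b, hb, hc'⟩ := h2
        show ll₂ w w'
        have key : ∀ (_ : a = v ∨ ll₁ a v) (_ : v = b ∨ ll₁ v b), a = b ∨ ll₁ a b := by
          rintro (rfl | hav) (rfl | hvb)
          · exact Or.inl rfl
          · exact Or.inr hvb
          · exact Or.inr hav
          · exact Or.inr (t₁ _ _ _ hav hvb)
        have step : ∀ (_ : a = b ∨ ll₁ a b), ll₂ w (f a) → ll₂ (f b) w' → ll₂ w w' := by
          rintro (rfl | hab) h1' h2'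
          · exact t₂ _ _ _ h1' h2'
          · exact t₂ _ _ _ (t₂ _ _ _ h1' ((hp a ha b hb).mp hab)) h2'
        rcases hc with ⟨hfa, hav⟩ | ⟨hll, hav⟩
        · rcases hc' with ⟨hvb, hfb⟩ | ⟨hvb, hll'⟩
          · have hab : ll₁ a b := t₁ _ _ _ hav hvb
            exact hfa ▸ hfb ▸ (hp a ha b hb).mp hab
          · have hab : a = b ∨ ll₁ a b := key (Or.inr hav) hvb
            rcases hab with rfl | hab
            · exact hfa ▸ hll'
            · exact t₂ _ _ _ (hfa ▸ (hp a ha b hb).mp hab) hll'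
        · rcases hc' with ⟨hvb, hfb⟩ | ⟨hvb, hll'⟩
          · have hab : a = b ∨ ll₁ a b := key hav (Or.inr hvb)
            rcases hab with rfl | hab
            · exact hfb ▸ hll
            · exact hfb ▸ t₂ _ _ _ hll ((hp a ha b hb).mp hab)
          · exact step (key hav hvb) hll hll'
    | inr w' =>
      cases r with
      | inl v =>
        obtain ⟨a, ha, hc⟩ := h2
        refine ⟨a, ha, Or.inr ?_⟩
        rcases hc with ⟨hfa, hav⟩ | ⟨hll, hav⟩
        · exact ⟨hfa ▸ h1, Or.inr hav⟩
        · exact ⟨t₂ _ _ _ h1 hll, hav⟩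
      | inr w'' => exact t₂ _ _ _ h1 h2

lemma step_LL (hinj : Set.InjOn f A₁)
    (hp : ∀ a ∈ A₁, ∀ b ∈ A₁, (ll₁ a b ↔ ll₂ (f a) (f b)))
    {p q : X₁ ⊕ X₂} (h : glueStep (sumRel ll₁ ll₂) (glueEqv A₁ f) p q) :
    LLrel A₁ f ll₁ ll₂ p q := by
  obtain ⟨p', q', e1, r, e2⟩ := h
  have E1 := glueE_of_eqv hinj e1
  have E2 := glueE_of_eqv hinj e2
  cases p' with
  | inl u' =>
    cases q' with
    | inl v' =>
      have hll : ll₁ u' v' := r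
      cases p with
      | inl u =>
        have : u = u' := E1
        subst this
        cases q with
        | inl v =>
          have : v' = v := E2
          subst this; exact hll
        | inr w =>
          obtain ⟨hv', hfv'⟩ := E2
          exact ⟨v', hv', Or.inl ⟨hll, hfv'⟩⟩
      | inr w =>
        obtain ⟨hu', hfu'⟩ := E1
        cases q with
        | inl v =>
          have : v' = v := E2
          subst this; exact ⟨u', hu', Or.inl ⟨hfu', hll⟩⟩
        | inr w' =>
          obtain ⟨hv', hfv'⟩ := E2
          show ll₂ w w'
          rw [← hfu', ← hfv']
          exact (hp u' hu' v' hv').mp hll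
    | inr v' => exact r.elim
  | inr u' =>
    cases q' with
    | inl v' => exact r.elim
    | inr v' =>
      have hll : ll₂ u' v' := r
      cases p with
      | inl u =>
        obtain ⟨hu, hfu⟩ := E1
        cases q with
        | inl v =>
          obtain ⟨hv, hfv⟩ := E2
          show ll₁ u v
          exact (hp u hu v hv).mpr (hfu ▸ hfv ▸ hll)
        | inr w =>
          have : v' = w := E2
          subst this; exact ⟨u, hu, Or.inr ⟨Or.inl rfl, hfu ▸ hll⟩⟩
      | inr w =>
        have : w = u' := E1
        subst this
        cases q with
        | inl v =>
          obtain ⟨hv, hfv⟩ := E2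
          exact ⟨v, hv, Or.inr ⟨hfv ▸ hll, Or.inl rfl⟩⟩
        | inr w' =>
          have : v' = w' := E2
          subst this; exact hll

lemma quotRel_of_LL {p q : X₁ ⊕ X₂} (h : LLrel A₁ f ll₁ ll₂ p q) :
    quotRel (sumRel ll₁ ll₂) (glueEqv A₁ f) p q := by
  cases p with
  | inl u =>
    cases q with
    | inl v => exact .single ⟨Sum.inl u, Sum.inl v, .refl _, h, .refl _⟩
    | inr w =>
      obtain ⟨a, ha, hc⟩ := h
      rcases hc with ⟨hua, hfa⟩ | ⟨rfl | hua, hll⟩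
      · exact .single ⟨Sum.inl u, Sum.inl a, .refl _, hua, hfa ▸ egen ha⟩
      · exact .single ⟨Sum.inr (f u), Sum.inr w, egen ha, hll, .refl _⟩
      · exact .head ⟨Sum.inl u, Sum.inl a, .refl _, hua, .refl _⟩
          (.single ⟨Sum.inr (f a), Sum.inr w, egen ha, hll, .refl _⟩)
  | inr w =>
    cases q with
    | inl v =>
      obtain ⟨a, ha, hc⟩ := h
      rcases hc with ⟨hfa, hav⟩ | ⟨hll, rfl | hav⟩
      · exact .single ⟨Sum.inl a, Sum.inl v, .symm _ _ (hfa ▸ egen ha), hav, .refl _⟩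
      · exact .single ⟨Sum.inr w, Sum.inr (f a), .refl _, hll, .symm _ _ (egen ha)⟩
      · exact .head ⟨Sum.inr w, Sum.inr (f a), .refl _, hll, .symm _ _ (egen ha)⟩
          (.single ⟨Sum.inl a, Sum.inl v, .refl _, hav, .refl _⟩)
    | inr w' => exact .single ⟨Sum.inr w, Sum.inr w', .refl _, h, .refl _⟩

lemma LL_of_quotRel (hinj : Set.InjOn f A₁)
    (t₁ : ∀ x y z, ll₁ x y → ll₁ y z → ll₁ x z)
    (t₂ : ∀ x y z, ll₂ x y → ll₂ y z → ll₂ x z)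
    (hp : ∀ a ∈ A₁, ∀ b ∈ A₁, (ll₁ a b ↔ ll₂ (f a) (f b)))
    {p q : X₁ ⊕ X₂} (h : quotRel (sumRel ll₁ ll₂) (glueEqv A₁ f) p q) :
    LLrel A₁ f ll₁ ll₂ p q := by
  induction h with
  | single h => exact step_LL hinj hp h
  | tail _ h2 ih => exact LL_trans hinj t₁ t₂ hp ih (step_LL hinj hp h2)

end Aux

/-- **Glued future representation at an unglued point**: for `x ∈ X₁ \ A₁`
(so `[x] = {x}`), the timelike future of `[x]` in the amalgamation is
`π(I₁⁺(x) ⊔ ⋃_{a ∈ A₁, x ≪ a} I₂⁺(f a))`, and analogously for the past. -/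
theorem unglued_point_future_past_representation {X₁ X₂ : Type*}
    (A₁ : Set X₁) (A₂ : Set X₂) (f : X₁ → X₂) (hf : Set.BijOn f A₁ A₂)
    (ll₁ le₁ : X₁ → X₁ → Prop) (ll₂ le₂ : X₂ → X₂ → Prop)
    (le₁_refl : ∀ x, le₁ x x) (le₁_trans : ∀ x y z, le₁ x y → le₁ y z → le₁ x z)
    (le₂_refl : ∀ x, le₂ x x) (le₂_trans : ∀ x y z, le₂ x y → le₂ y z → le₂ x z)
    (ll₁_trans : ∀ x y z, ll₁ x y → ll₁ y z → ll₁ x z)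
    (ll₂_trans : ∀ x y z, ll₂ x y → ll₂ y z → ll₂ x z)
    (ll₁_le : ∀ x y, ll₁ x y → le₁ x y) (ll₂_le : ∀ x y, ll₂ x y → le₂ x y)
    (hpres_le : ∀ a ∈ A₁, ∀ b ∈ A₁, (le₁ a b ↔ le₂ (f a) (f b)))
    (hpres_ll : ∀ a ∈ A₁, ∀ b ∈ A₁, (ll₁ a b ↔ ll₂ (f a) (f b)))
    (x : X₁) (hx : x ∈ A₁ᶜ) :
    ({q | qRel A₁ f (sumRel ll₁ ll₂) (Quotient.mk (glueSetoid A₁ f) (Sum.inl x)) q} =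
      Quotient.mk (glueSetoid A₁ f) ''
        (Sum.inl '' {y | ll₁ x y} ∪
         Sum.inr '' (⋃ a ∈ {a ∈ A₁ | ll₁ x a}, {y | ll₂ (f a) y}))) ∧
    ({q | qRel A₁ f (sumRel ll₁ ll₂) q (Quotient.mk (glueSetoid A₁ f) (Sum.inl x))} =
      Quotient.mk (glueSetoid A₁ f) ''
        (Sum.inl '' {y | ll₁ y x} ∪
         Sum.inr '' (⋃ a ∈ {a ∈ A₁ | ll₁ a x}, {y | ll₂ y (f a)}))) := by
  have hinj : Set.InjOn f A₁ := hf.injOn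
  -- a representative equivalent to `Sum.inl x` must be `Sum.inl x` itself
  have hrep : ∀ p : X₁ ⊕ X₂, glueEqv A₁ f p (Sum.inl x) → p = Sum.inl x := by
    intro p h
    have hE := glueE_of_eqv hinj h
    cases p with
    | inl u => exact congrArg Sum.inl hE
    | inr w => exact absurd hE.1 hx
  constructor
  · ext q
    simp only [Set.mem_setOf_eq]
    constructor
    · rintro ⟨x', y', hx', hy', hchain⟩
      have hx'' : x' = Sum.inl x := hrep x' (Quotient.exact hx')
      subst hx''
      have hLL := LL_of_quotRel hinj ll₁_trans ll₂_trans hpres_ll hchain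
      cases y' with
      | inl v =>
        exact ⟨Sum.inl v, Or.inl ⟨v, hLL, rfl⟩, hy'⟩
      | inr w =>
        obtain ⟨a, ha, hc⟩ := hLL
        rcases hc with ⟨hxa, hfa⟩ | ⟨rfl | hxa, hll⟩
        · refine ⟨Sum.inl a, Or.inl ⟨a, hxa, rfl⟩, ?_⟩
          calc Quotient.mk (glueSetoid A₁ f) (Sum.inl a)
              = Quotient.mk (glueSetoid A₁ f) (Sum.inr w) := by
                exact Quotient.sound (hfa ▸ egen ha)
            _ = q := hy'
        · exact absurd ha hx
        · refine ⟨Sum.inr w, Or.inr ⟨w, ?_, rfl⟩, hy'⟩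
          exact Set.mem_iUnion₂.mpr ⟨a, ⟨ha, hxa⟩, hll⟩
    · rintro ⟨p, hp, rfl⟩
      rcases hp with ⟨y, hy, rfl⟩ | ⟨w, hw, rfl⟩
      · exact ⟨Sum.inl x, Sum.inl y, rfl, rfl, quotRel_of_LL hy⟩
      · obtain ⟨a, ⟨ha, hxa⟩, hll⟩ := Set.mem_iUnion₂.mp hw
        exact ⟨Sum.inl x, Sum.inr w, rfl, rfl,
          quotRel_of_LL ⟨a, ha, Or.inr ⟨Or.inr hxa, hll⟩⟩⟩
  · ext q
    simp only [Set.mem_setOf_eq]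
    constructor
    · rintro ⟨y', x', hy', hx', hchain⟩
      have hx'' : x' = Sum.inl x := hrep x' (Quotient.exact hx')
      subst hx''
      have hLL := LL_of_quotRel hinj ll₁_trans ll₂_trans hpres_ll hchain
      cases y' with
      | inl v =>
        exact ⟨Sum.inl v, Or.inl ⟨v, hLL, rfl⟩, hy'⟩
      | inr w =>
        obtain ⟨a, ha, hc⟩ := hLL
        rcases hc with ⟨hfa, hax⟩ | ⟨hll, rfl | hax⟩
        · refine ⟨Sum.inl a, Or.inl ⟨a, hax, rfl⟩, ?_⟩
          calc Quotient.mk (glueSetoid A₁ f) (Sum.inl a)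
              = Quotient.mk (glueSetoid A₁ f) (Sum.inr w) := by
                exact Quotient.sound (hfa ▸ egen ha)
            _ = q := hy'
        · exact absurd ha hx
        · refine ⟨Sum.inr w, Or.inr ⟨w, ?_, rfl⟩, hy'⟩
          exact Set.mem_iUnion₂.mpr ⟨a, ⟨ha, hax⟩, hll⟩
    · rintro ⟨p, hp, rfl⟩
      rcases hp with ⟨y, hy, rfl⟩ | ⟨w, hw, rfl⟩
      · exact ⟨Sum.inl y, Sum.inl x, rfl, rfl, quotRel_of_LL hy⟩
      · obtain ⟨a, ⟨ha, hax⟩, hll⟩ := Set.mem_iUnion₂.mp hw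
        exact ⟨Sum.inr w, Sum.inl x, rfl, rfl,
          quotRel_of_LL ⟨a, ha, Or.inr ⟨hll, Or.inr hax⟩⟩⟩
end

section
/- If X₁ and X₂ are causally path-connected Lorentzian pre-length spaces, then their Lorentzian amalgamation X = X₁ ⊔_A X₂ is causally path-connected: whenever [x] ≤̃ [y] there is a (future-directed) causal curve in X from [x] to [y], and whenever [x] ≪̃ [y] there is a timelike curve. -/
open Set Metric

variable {α : Type*}

/-!
Every `≤̃`-related (resp. `≪̃`-related) pair of points of the amalgamation is joined by a
finite chain `x ∼ x₁ R y₁ ∼ x₂ R y₂ ∼ ⋯ ∼ yₙ ∼ y` whose links `xᵢ R yᵢ` lie in a single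
factor. Each link is joined by a causal (timelike) curve of that factor, whose projection is a
causal (timelike) curve of the quotient because the projection is `1`-Lipschitz for the
quotient semi-metric and maps related points to related points. Concatenating these finitely
many curves gives the curve sought.
-/

section Curves

variable {β : Type*}

def LocLipschitzOn (D : α → α → ENNReal) (γ : ℝ → α) (s : Set ℝ) : Prop :=
  ∀ t ∈ s, ∃ K : NNReal, ∃ ε > (0:ℝ), ∀ u ∈ s, ∀ v ∈ s,
    |u - t| < ε → |v - t| < ε → D (γ u) (γ v) ≤ (K : ENNReal) * ENNReal.ofReal |u - v|

def ExistsCausalCurve (D : α → α → ENNReal) (R : α → α → Prop) (x y : α) : Prop :=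
  ∃ γ a b, IsCausalCurveE D R γ a b ∧ γ a = x ∧ γ b = y

def CausallyPathConnected (D : α → α → ENNReal) (R : α → α → Prop) : Prop :=
  ∀ x y, R x y → ExistsCausalCurve D R x y

variable {D : α → α → ENNReal} {R : α → α → Prop} {γ γ' : ℝ → α} {a b c : ℝ}

lemma LocLipschitzOn.exists_near {s : Set ℝ} (h : LocLipschitzOn D γ s) (hs : IsClosed s)
    (t : ℝ) : ∃ K : NNReal, ∃ ε > (0:ℝ), ∀ u ∈ s, ∀ v ∈ s,
      |u - t| < ε → |v - t| < ε → D (γ u) (γ v) ≤ (K : ENNReal) * ENNReal.ofReal |u - v| := by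
  by_cases ht : t ∈ s
  · exact h t ht
  obtain ⟨ε, hε, hball⟩ := Metric.isOpen_iff.1 hs.isOpen_compl t ht
  exact ⟨0, ε, hε, fun u hu _ _ hut _ => absurd hu (hball (by rwa [mem_ball, Real.dist_eq]))⟩

lemma ENNReal.ofReal_abs_sub_add_abs_sub {u w v : ℝ} (hw : w ∈ uIcc u v) :
    ENNReal.ofReal |u - w| + ENNReal.ofReal |w - v| = ENNReal.ofReal |u - v| := by
  have h := dist_add_dist_of_mem_segment (segment_eq_uIcc u v ▸ hw)
  simp only [Real.dist_eq] at h
  rw [← ENNReal.ofReal_add (abs_nonneg _) (abs_nonneg _), h]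

lemma LocLipschitzOn.Icc_union (Dtri : ∀ x y z, D x z ≤ D x y + D y z)
    (h₁ : LocLipschitzOn D γ (Icc a b)) (h₂ : LocLipschitzOn D γ (Icc b c)) :
    LocLipschitzOn D γ (Icc a c) := by
  intro t ht
  obtain ⟨K₁, ε₁, hε₁, hK₁⟩ := h₁.exists_near isClosed_Icc t
  obtain ⟨K₂, ε₂, hε₂, hK₂⟩ := h₂.exists_near isClosed_Icc t
  set K := K₁ + K₂
  set ε := min ε₁ ε₂
  let Bound u v := D (γ u) (γ v) ≤ (K : ENNReal) * ENNReal.ofReal |u - v|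
  have bound₁ : ∀ u ∈ Icc a b, ∀ v ∈ Icc a b, |u - t| < ε → |v - t| < ε → Bound u v :=
    fun u hu v hv hut hvt => (hK₁ u hu v hv (hut.trans_le (min_le_left _ _))
      (hvt.trans_le (min_le_left _ _))).trans (by gcongr; simp [K])
  have bound₂ : ∀ u ∈ Icc b c, ∀ v ∈ Icc b c, |u - t| < ε → |v - t| < ε → Bound u v :=
    fun u hu v hv hut hvt => (hK₂ u hu v hv (hut.trans_le (min_le_right _ _))
      (hvt.trans_le (min_le_right _ _))).trans (by gcongr; simp [K])
  have via : ∀ u w v, w ∈ uIcc u v → Bound u w → Bound w v → Bound u v :=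
    fun u w v hw huw hwv => calc D (γ u) (γ v) ≤ D (γ u) (γ w) + D (γ w) (γ v) := Dtri _ _ _
      _ ≤ K * ENNReal.ofReal |u - w| + K * ENNReal.ofReal |w - v| := add_le_add huw hwv
      _ = K * ENNReal.ofReal |u - v| := by rw [← mul_add, ENNReal.ofReal_abs_sub_add_abs_sub hw]
  refine ⟨K, ε, lt_min hε₁ hε₂, fun u hu v hv hut hvt => ?_⟩
  have hbt : ∀ {p q : ℝ}, |p - t| < ε → |q - t| < ε → p ≤ b → b ≤ q → |b - t| < ε :=
    fun hp hq hpb hbq => abs_lt.2 ⟨by linarith [(abs_lt.1 hp).1], by linarith [(abs_lt.1 hq).2]⟩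
  rcases le_total u b with hub | hbu <;> rcases le_total v b with hvb | hbv
  · exact bound₁ u ⟨hu.1, hub⟩ v ⟨hv.1, hvb⟩ hut hvt
  · have hb : |b - t| < ε := hbt hut hvt hub hbv
    exact via u b v (mem_uIcc_of_le hub hbv)
      (bound₁ u ⟨hu.1, hub⟩ b ⟨hu.1.trans hub, le_rfl⟩ hut hb)
      (bound₂ b ⟨le_rfl, hbv.trans hv.2⟩ v ⟨hbv, hv.2⟩ hb hvt)
  · have hb : |b - t| < ε := hbt hvt hut hvb hbu
    exact via u b v (mem_uIcc_of_ge hvb hbu)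
      (bound₂ u ⟨hbu, hu.2⟩ b ⟨le_rfl, hbu.trans hu.2⟩ hut hb)
      (bound₁ b ⟨hv.1.trans hvb, le_rfl⟩ v ⟨hv.1, hvb⟩ hb hvt)
  · exact bound₂ u ⟨hbu, hu.2⟩ v ⟨hbv, hv.2⟩ hut hvt

lemma IsCausalCurveE.congr (h : IsCausalCurveE D R γ a b) (heq : EqOn γ γ' (Icc a b)) :
    IsCausalCurveE D R γ' a b := by
  obtain ⟨hab, hlip, hmono⟩ := h
  refine ⟨hab, fun t ht => ?_, fun u hu v hv huv => heq hu ▸ heq hv ▸ hmono u hu v hv huv⟩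
  obtain ⟨K, ε, hε, hK⟩ := hlip t ht
  exact ⟨K, ε, hε, fun u hu v hv hut hvt => heq hu ▸ heq hv ▸ hK u hu v hv hut hvt⟩

lemma IsCausalCurveE.Icc_union (Dtri : ∀ x y z, D x z ≤ D x y + D y z)
    (Rtrans : ∀ x y z, R x y → R y z → R x z)
    (h₁ : IsCausalCurveE D R γ a b) (h₂ : IsCausalCurveE D R γ b c) :
    IsCausalCurveE D R γ a c := by
  obtain ⟨hab, hlip₁, hmono₁⟩ := h₁
  obtain ⟨hbc, hlip₂, hmono₂⟩ := h₂
  refine ⟨hab.trans hbc, LocLipschitzOn.Icc_union Dtri hlip₁ hlip₂, fun u hu v hv huv => ?_⟩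
  rcases le_or_gt v b with hvb | hbv
  · exact hmono₁ u ⟨hu.1, huv.le.trans hvb⟩ v ⟨hv.1, hvb⟩ huv
  rcases le_or_gt b u with hbu | hub
  · exact hmono₂ u ⟨hbu, hu.2⟩ v ⟨hbv.le, hv.2⟩ huv
  exact Rtrans _ _ _ (hmono₁ u ⟨hu.1, hub.le⟩ b ⟨hab, le_rfl⟩ hub)
    (hmono₂ b ⟨le_rfl, hbc⟩ v ⟨hbv.le, hv.2⟩ hbv)

lemma IsCausalCurveE.comp_add_const (h : IsCausalCurveE D R γ a b) (c : ℝ) :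
    IsCausalCurveE D R (fun t => γ (t + c)) (a - c) (b - c) := by
  obtain ⟨hab, hlip, hmono⟩ := h
  have mem : ∀ {u}, u ∈ Icc (a - c) (b - c) → u + c ∈ Icc a b := fun hu =>
    ⟨by linarith [hu.1], by linarith [hu.2]⟩
  refine ⟨by linarith, fun t ht => ?_,
    fun u hu v hv huv => hmono _ (mem hu) _ (mem hv) (by linarith)⟩
  obtain ⟨K, ε, hε, hK⟩ := hlip (t + c) (mem ht)
  refine ⟨K, ε, hε, fun u hu v hv hut hvt => ?_⟩
  simpa only [add_sub_add_right_eq_sub] using hK _ (mem hu) _ (mem hv)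
    (by rwa [add_sub_add_right_eq_sub]) (by rwa [add_sub_add_right_eq_sub])

lemma IsCausalCurveE.map {D' : β → β → ENNReal} {R' : β → β → Prop} (φ : α → β)
    (hD : ∀ x y, D' (φ x) (φ y) ≤ D x y) (hR : ∀ x y, R x y → R' (φ x) (φ y))
    (h : IsCausalCurveE D R γ a b) : IsCausalCurveE D' R' (φ ∘ γ) a b := by
  obtain ⟨hab, hlip, hmono⟩ := h
  refine ⟨hab, fun t ht => ?_, fun u hu v hv huv => hR _ _ (hmono u hu v hv huv)⟩
  obtain ⟨K, ε, hε, hK⟩ := hlip t ht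
  exact ⟨K, ε, hε, fun u hu v hv hut hvt => (hD _ _).trans (hK u hu v hv hut hvt)⟩

lemma ExistsCausalCurve.trans (Dtri : ∀ x y z, D x z ≤ D x y + D y z)
    (Rtrans : ∀ x y z, R x y → R y z → R x z) {x y z : α}
    (hxy : ExistsCausalCurve D R x y) (hyz : ExistsCausalCurve D R y z) :
    ExistsCausalCurve D R x z := by
  obtain ⟨γ₁, a, b, h₁, rfl, rfl⟩ := hxy
  obtain ⟨γ₂, a₂, c, h₂, hj, rfl⟩ := hyz
  set γ := fun t => if t ≤ b then γ₁ t else γ₂ (t + (a₂ - b))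
  have h₂' := h₂.comp_add_const (a₂ - b)
  rw [sub_sub_cancel] at h₂'
  have heq₂ : EqOn (fun t => γ₂ (t + (a₂ - b))) γ (Icc b (c - (a₂ - b))) := by
    intro t ht
    by_cases htb : t ≤ b
    · obtain rfl : t = b := le_antisymm htb ht.1
      simp [γ, hj]
    · simp [γ, htb]
  refine ⟨γ, a, c - (a₂ - b), (h₁.congr fun t ht => ?_).Icc_union Dtri Rtrans (h₂'.congr heq₂),
    if_pos h₁.1, ?_⟩
  · simp [γ, ht.2]
  · simpa using (heq₂ ⟨h₂'.1, le_rfl⟩).symm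

end Curves

section Chains

variable {R eqv : α → α → Prop}

lemma quotRel_of_eqv_right (eqv_trans : ∀ x y z, eqv x y → eqv y z → eqv x z) {x y z : α}
    (h : quotRel R eqv x y) (hyz : eqv y z) : quotRel R eqv x z := by
  obtain ⟨w, hxw, p, q, hwp, hpq, hqy⟩ := Relation.TransGen.tail'_iff.1 h
  exact .tail' hxw ⟨p, q, hwp, hpq, eqv_trans _ _ _ hqy hyz⟩

lemma IsGlueChain.append (eqv_trans : ∀ x y z, eqv x y → eqv y z → eqv x z) {x y z : α}
    {l₁ l₂ : List (α × α)} (h₁ : IsGlueChain eqv x y l₁) (h₂ : IsGlueChain eqv y z l₂) :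
    IsGlueChain eqv x z (l₁ ++ l₂) := by
  obtain ⟨hne₁, hc₁, ⟨p₁, hp₁, hxp₁⟩, ⟨q₁, hq₁, hq₁y⟩⟩ := h₁
  obtain ⟨-, hc₂, ⟨p₂, hp₂, hyp₂⟩, ⟨q₂, hq₂, hq₂z⟩⟩ := h₂
  refine ⟨by simp [hne₁], List.isChain_append.2 ⟨hc₁, hc₂, ?_⟩, ⟨p₁, ?_, hxp₁⟩, ⟨q₂, ?_, hq₂z⟩⟩
  · rintro u hu v hv
    cases hq₁.symm.trans hu
    cases hp₂.symm.trans hv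
    exact eqv_trans _ _ _ hq₁y hyp₂
  · rw [List.head?_append, hp₁]; rfl
  · rw [List.getLast?_append, hq₂]; rfl

lemma quotDist_triangle {D : α → α → ENNReal} (eqv_trans : ∀ x y z, eqv x y → eqv y z → eqv x z)
    (x y z : α) :
    quotDist D eqv x z ≤ quotDist D eqv x y + quotDist D eqv y z := by
  unfold quotDist
  rw [ENNReal.sInf_add]
  refine le_iInf₂ fun v₁ hv₁ => ?_
  rw [add_comm, ENNReal.sInf_add]
  refine le_iInf₂ fun v₂ hv₂ => ?_
  obtain ⟨l₁, hl₁, rfl⟩ := hv₁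
  obtain ⟨l₂, hl₂, rfl⟩ := hv₂
  exact sInf_le ⟨l₁ ++ l₂, hl₁.append eqv_trans hl₂, by simp [add_comm]⟩

end Chains

section Amalgamation

variable {X₁ X₂ : Type*} {A₁ : Set X₁} {f : X₁ → X₂}

local notation "π" => Quotient.mk (glueSetoid A₁ f)

lemma qRel_mk {R : X₁ ⊕ X₂ → X₁ ⊕ X₂ → Prop} {u w : X₁ ⊕ X₂} (h : R u w) :
    qRel A₁ f R (π u) (π w) :=
  ⟨u, w, rfl, rfl, .single ⟨u, w, .refl _, h, .refl _⟩⟩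

lemma qRel_trans {R : X₁ ⊕ X₂ → X₁ ⊕ X₂ → Prop} (p q r : Quotient (glueSetoid A₁ f))
    (hpq : qRel A₁ f R p q) (hqr : qRel A₁ f R q r) : qRel A₁ f R p r := by
  obtain ⟨x, y, rfl, rfl, hxy⟩ := hpq
  obtain ⟨y', z, hy, rfl, hyz⟩ := hqr
  exact ⟨x, z, rfl, rfl,
    (quotRel_of_eqv_right Relation.EqvGen.trans hxy (Quotient.exact hy.symm)).trans hyz⟩

variable [PseudoEMetricSpace X₁] [PseudoEMetricSpace X₂]

lemma qDist_triangle (p q r : Quotient (glueSetoid A₁ f)) :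
    qDist A₁ f p r ≤ qDist A₁ f p q + qDist A₁ f q r :=
  quotDist_triangle Relation.EqvGen.trans _ _ _

lemma qDist_mk_le (u w : X₁ ⊕ X₂) : qDist A₁ f (π u) (π w) ≤ sumEDist u w := by
  have hu : glueEqv A₁ f (π u).out u := Quotient.exact (Quotient.out_eq (π u))
  have hw : glueEqv A₁ f (π w).out w := Quotient.exact (Quotient.out_eq (π w))
  exact sInf_le ⟨[(u, w)], ⟨List.cons_ne_nil _ _, List.isChain_singleton _, ⟨_, rfl, hu⟩,
    ⟨_, rfl, .symm _ _ hw⟩⟩, by simp⟩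

variable {r₁ : X₁ → X₁ → Prop} {r₂ : X₂ → X₂ → Prop}

lemma exists_causalCurve_mk_of_sumRel (h₁ : CausallyPathConnected (fun u w => edist u w) r₁)
    (h₂ : CausallyPathConnected (fun u w => edist u w) r₂) {u w : X₁ ⊕ X₂}
    (huw : sumRel r₁ r₂ u w) :
    ExistsCausalCurve (qDist A₁ f) (qRel A₁ f (sumRel r₁ r₂)) (π u) (π w) :=
  match u, w, huw with
  | .inl u, .inl w, huw => by
    obtain ⟨γ, a, b, hγ, rfl, rfl⟩ := h₁ u w huw
    exact ⟨_, a, b, hγ.map (π ∘ Sum.inl) (fun x y => qDist_mk_le (.inl x) (.inl y))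
      (fun x y => qRel_mk (u := .inl x) (w := .inl y)), rfl, rfl⟩
  | .inr u, .inr w, huw => by
    obtain ⟨γ, a, b, hγ, rfl, rfl⟩ := h₂ u w huw
    exact ⟨_, a, b, hγ.map (π ∘ Sum.inr) (fun x y => qDist_mk_le (.inr x) (.inr y))
      (fun x y => qRel_mk (u := .inr x) (w := .inr y)), rfl, rfl⟩

lemma exists_causalCurve_mk_of_glueStep (h₁ : CausallyPathConnected (fun u w => edist u w) r₁)
    (h₂ : CausallyPathConnected (fun u w => edist u w) r₂) {x y : X₁ ⊕ X₂}
    (hxy : glueStep (sumRel r₁ r₂) (glueEqv A₁ f) x y) :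
    ExistsCausalCurve (qDist A₁ f) (qRel A₁ f (sumRel r₁ r₂)) (π x) (π y) := by
  obtain ⟨p, q, hxp, hpq, hqy⟩ := hxy
  rw [Quotient.sound (s := glueSetoid A₁ f) hxp, ← Quotient.sound (s := glueSetoid A₁ f) hqy]
  exact exists_causalCurve_mk_of_sumRel h₁ h₂ hpq

theorem CausallyPathConnected.amalgamation
    (h₁ : CausallyPathConnected (fun u w => edist u w) r₁)
    (h₂ : CausallyPathConnected (fun u w => edist u w) r₂) :
    CausallyPathConnected (qDist A₁ f) (qRel A₁ f (sumRel r₁ r₂)) := by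
  rintro _ _ ⟨x, y, rfl, rfl, hxy⟩
  induction hxy with
  | single h => exact exists_causalCurve_mk_of_glueStep h₁ h₂ h
  | tail _ h ih =>
    exact ih.trans qDist_triangle qRel_trans (exists_causalCurve_mk_of_glueStep h₁ h₂ h)

end Amalgamation

theorem amalgamation_causallyPathConnected_general
    {X₁ X₂ : Type*} [MetricSpace X₁] [MetricSpace X₂]
    (A₁ : Set X₁)
    (f : X₁ → X₂)
    (ll₁ le₁ : X₁ → X₁ → Prop) (ll₂ le₂ : X₂ → X₂ → Prop)
    (cpc₁_causal : ∀ x y, le₁ x y → ∃ γ a b,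
      IsCausalCurveE (fun u w => edist u w) le₁ γ a b ∧ γ a = x ∧ γ b = y)
    (cpc₁_timelike : ∀ x y, ll₁ x y → ∃ γ a b,
      IsCausalCurveE (fun u w => edist u w) ll₁ γ a b ∧ γ a = x ∧ γ b = y)
    (cpc₂_causal : ∀ x y, le₂ x y → ∃ γ a b,
      IsCausalCurveE (fun u w => edist u w) le₂ γ a b ∧ γ a = x ∧ γ b = y)
    (cpc₂_timelike : ∀ x y, ll₂ x y → ∃ γ a b,
      IsCausalCurveE (fun u w => edist u w) ll₂ γ a b ∧ γ a = x ∧ γ b = y)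
    :
    (∀ x y : X₁ ⊕ X₂, quotRel (sumRel le₁ le₂) (glueEqv A₁ f) x y →
      ∃ γ a b, IsCausalCurveE (qDist A₁ f) (qRel A₁ f (sumRel le₁ le₂)) γ a b ∧
        γ a = Quotient.mk (glueSetoid A₁ f) x ∧ γ b = Quotient.mk (glueSetoid A₁ f) y) ∧
    (∀ x y : X₁ ⊕ X₂, quotRel (sumRel ll₁ ll₂) (glueEqv A₁ f) x y →
      ∃ γ a b, IsCausalCurveE (qDist A₁ f) (qRel A₁ f (sumRel ll₁ ll₂)) γ a b ∧
        γ a = Quotient.mk (glueSetoid A₁ f) x ∧ γ b = Quotient.mk (glueSetoid A₁ f) y) :=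
  ⟨fun x y h => CausallyPathConnected.amalgamation cpc₁_causal cpc₂_causal _ _ ⟨x, y, rfl, rfl, h⟩,
    fun x y h =>
      CausallyPathConnected.amalgamation cpc₁_timelike cpc₂_timelike _ _ ⟨x, y, rfl, rfl, h⟩⟩

/-- If `X₁` and `X₂` are causally path-connected, then their amalgamation is causally
path-connected: `[x] ≤̃ [y]` yields a causal curve and `[x] ≪̃ [y]` a timelike curve
from `[x]` to `[y]` in the quotient. -/
theorem amalgamation_causallyPathConnected
    {X₁ X₂ : Type*} [MetricSpace X₁] [MetricSpace X₂]
    (A₁ : Set X₁) (A₂ : Set X₂) (hA₁ : IsClosed A₁) (hA₂ : IsClosed A₂)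
    (f : X₁ → X₂) (g : X₂ → X₁) (hf : Set.BijOn f A₁ A₂)
    (hgf : ∀ a ∈ A₁, g (f a) = a) (hfc : ContinuousOn f A₁) (hgc : ContinuousOn g A₂)
    (hlip : ∀ a ∈ A₁, ∃ ε > (0:ℝ), ∃ K : NNReal, ∀ x ∈ A₁ ∩ Metric.ball a ε,
      ∀ y ∈ A₁ ∩ Metric.ball a ε,
        dist (f x) (f y) ≤ K * dist x y ∧ dist x y ≤ K * dist (f x) (f y))
    (ll₁ le₁ : X₁ → X₁ → Prop) (ll₂ le₂ : X₂ → X₂ → Prop)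
    (τ₁ : X₁ → X₁ → ENNReal) (τ₂ : X₂ → X₂ → ENNReal)
    (le₁_refl : ∀ x, le₁ x x) (le₁_trans : ∀ x y z, le₁ x y → le₁ y z → le₁ x z)
    (le₂_refl : ∀ x, le₂ x x) (le₂_trans : ∀ x y z, le₂ x y → le₂ y z → le₂ x z)
    (ll₁_trans : ∀ x y z, ll₁ x y → ll₁ y z → ll₁ x z)
    (ll₂_trans : ∀ x y z, ll₂ x y → ll₂ y z → ll₂ x z)
    (ll₁_le : ∀ x y, ll₁ x y → le₁ x y) (ll₂_le : ∀ x y, ll₂ x y → le₂ x y)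
    (τ₁_lsc : LowerSemicontinuous fun p : X₁ × X₁ => τ₁ p.1 p.2)
    (τ₂_lsc : LowerSemicontinuous fun p : X₂ × X₂ => τ₂ p.1 p.2)
    (rev_tri₁ : ∀ x y z, le₁ x y → le₁ y z → τ₁ x y + τ₁ y z ≤ τ₁ x z)
    (rev_tri₂ : ∀ x y z, le₂ x y → le₂ y z → τ₂ x y + τ₂ y z ≤ τ₂ x z)
    (ll₁_iff : ∀ x y, ll₁ x y ↔ 0 < τ₁ x y) (ll₂_iff : ∀ x y, ll₂ x y ↔ 0 < τ₂ x y)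
    (ntli₁_future : ∀ a ∈ A₁, (∃ q, ll₁ a q) → ∀ U ∈ nhds a, ∃ b ∈ U ∩ A₁, ll₁ a b)
    (ntli₁_past : ∀ a ∈ A₁, (∃ q, ll₁ q a) → ∀ U ∈ nhds a, ∃ b ∈ U ∩ A₁, ll₁ b a)
    (ntli₂_future : ∀ a ∈ A₂, (∃ q, ll₂ a q) → ∀ U ∈ nhds a, ∃ b ∈ U ∩ A₂, ll₂ a b)
    (ntli₂_past : ∀ a ∈ A₂, (∃ q, ll₂ q a) → ∀ U ∈ nhds a, ∃ b ∈ U ∩ A₂, ll₂ b a)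
    (hpres_le : ∀ a ∈ A₁, ∀ b ∈ A₁, (le₁ a b ↔ le₂ (f a) (f b)))
    (hpres_ll : ∀ a ∈ A₁, ∀ b ∈ A₁, (ll₁ a b ↔ ll₂ (f a) (f b)))
    (hpres_tau : ∀ a ∈ A₁, ∀ b ∈ A₁, τ₁ a b = τ₂ (f a) (f b))
    (hcompat : ∀ a ∈ A₁, ((∃ q, ll₁ a q) ↔ (∃ q, ll₂ (f a) q)) ∧
      ((∃ q, ll₁ q a) ↔ (∃ q, ll₂ q (f a))))
    (cpc₁_causal : ∀ x y, le₁ x y → ∃ γ a b,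
      IsCausalCurveE (fun u w => edist u w) le₁ γ a b ∧ γ a = x ∧ γ b = y)
    (cpc₁_timelike : ∀ x y, ll₁ x y → ∃ γ a b,
      IsCausalCurveE (fun u w => edist u w) ll₁ γ a b ∧ γ a = x ∧ γ b = y)
    (cpc₂_causal : ∀ x y, le₂ x y → ∃ γ a b,
      IsCausalCurveE (fun u w => edist u w) le₂ γ a b ∧ γ a = x ∧ γ b = y)
    (cpc₂_timelike : ∀ x y, ll₂ x y → ∃ γ a b,
      IsCausalCurveE (fun u w => edist u w) ll₂ γ a b ∧ γ a = x ∧ γ b = y)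
    :
    (∀ x y : X₁ ⊕ X₂, quotRel (sumRel le₁ le₂) (glueEqv A₁ f) x y →
      ∃ γ a b, IsCausalCurveE (qDist A₁ f) (qRel A₁ f (sumRel le₁ le₂)) γ a b ∧
        γ a = Quotient.mk (glueSetoid A₁ f) x ∧ γ b = Quotient.mk (glueSetoid A₁ f) y) ∧
    (∀ x y : X₁ ⊕ X₂, quotRel (sumRel ll₁ ll₂) (glueEqv A₁ f) x y →
      ∃ γ a b, IsCausalCurveE (qDist A₁ f) (qRel A₁ f (sumRel ll₁ ll₂)) γ a b ∧
        γ a = Quotient.mk (glueSetoid A₁ f) x ∧ γ b = Quotient.mk (glueSetoid A₁ f) y) :=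
  amalgamation_causallyPathConnected_general A₁ f ll₁ le₁ ll₂ le₂ cpc₁_causal cpc₁_timelike
    cpc₂_causal cpc₂_timelike
end
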